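/- arXiv:1209.3595 — 5 statements merged into one kernel-verified Lean document; each statement's English description precedes it below -/
import Mathlib

section
/- Let J be an almost complex structure on a differential *-calculus (Ω•A, d, *). The following conditions are equivalent: (1) ∂̄² = 0 as an operator A → Ω²A; (2) ∂² = 0 as an operator A → Ω²A; (3) d = ∂ + ∂̄ as operators Ω¹A → Ω²A; (4) d(Ω^{1,0}A) ⊆ Ω^{2,0}A ⊕ Ω^{1,1}A; (5) d(Ω^{0,1}A) ⊆ Ω^{1,1}A ⊕ Ω^{0,2}A. -/
noncomputable section

open scoped TensorProduct

/-- A differential `*`-calculus `(Ω•A, d, *)` on the `*`-algebra `A = G 0`: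
an ℕ-graded associative ℂ-algebra `Ω` with `Ω⁰A = A = G 0`, generation
`Ωⁿ⁺¹A = A·d(ΩⁿA)`, a degree-one differential `d` with `d² = 0` satisfying the graded
Leibniz rule, and a grade-preserving conjugate-linear involution `starOp` such that
`(dξ)* = d(ξ*)` and `(ξ∧η)* = (−1)^{|ξ||η|} η*∧ξ*` for homogeneous `ξ`, `η`. -/
structure DiffStarCalc (Ω : Type*) [Ring Ω] [Algebra ℂ Ω] where
  /-- the grading: `G n` is the space of `n`-forms `ΩⁿA`; `G 0 = A`. -/
  G : ℕ → Submodule ℂ Ω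
  internal : DirectSum.IsInternal G
  one_mem : (1 : Ω) ∈ G 0
  mul_mem : ∀ {m n : ℕ} {x y : Ω}, x ∈ G m → y ∈ G n → x * y ∈ G (m + n)
  /-- the differential -/
  d : Ω →ₗ[ℂ] Ω
  d_mem : ∀ (n : ℕ), ∀ x ∈ G n, d x ∈ G (n + 1)
  d_d : ∀ x : Ω, d (d x) = 0
  leibniz : ∀ (n : ℕ), ∀ x ∈ G n, ∀ y : Ω,
      d (x * y) = d x * y + ((-1 : ℂ) ^ n) • (x * d y)
  gen : ∀ n : ℕ, G (n + 1) ≤ Submodule.span ℂ {z : Ω | ∃ a ∈ G 0, ∃ x ∈ G n, z = a * d x}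
  /-- the `*`-operation -/
  starOp : Ω → Ω
  starOp_add : ∀ x y : Ω, starOp (x + y) = starOp x + starOp y
  starOp_smul : ∀ (c : ℂ) (x : Ω), starOp (c • x) = (starRingEnd ℂ) c • starOp x
  starOp_starOp : ∀ x : Ω, starOp (starOp x) = x
  starOp_mem : ∀ (n : ℕ), ∀ x ∈ G n, starOp x ∈ G n
  starOp_mul : ∀ (m n : ℕ), ∀ x ∈ G m, ∀ y ∈ G n,
      starOp (x * y) = ((-1 : ℂ) ^ (m * n)) • (starOp y * starOp x)
  starOp_d : ∀ x : Ω, starOp (d x) = d (starOp x)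

/-- An almost complex structure on a differential `*`-calculus: a degree-zero
ℂ-linear derivation `J` of `Ω•A` vanishing on `A = G 0`, with `J² = −1` on `Ω¹A = G 1`
and `J(ξ*) = (Jξ)*` for `ξ ∈ Ω¹A`. -/
structure AlmostComplexCalc (Ω : Type*) [Ring Ω] [Algebra ℂ Ω] extends DiffStarCalc Ω where
  /-- the almost complex structure -/
  J : Ω →ₗ[ℂ] Ω
  J_mem : ∀ (n : ℕ), ∀ x ∈ G n, J x ∈ G n
  J_deriv : ∀ x y : Ω, J (x * y) = J x * y + x * J y
  J_zero : ∀ x ∈ G 0, J x = 0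
  J_sq : ∀ x ∈ G 1, J (J x) = -x
  J_star : ∀ x ∈ G 1, J (starOp x) = starOp (J x)

namespace AlmostComplexCalc

variable {Ω : Type*} [Ring Ω] [Algebra ℂ Ω]

/-- The space of `(p,q)`-forms `Ω^{p,q}A := {ξ ∈ Ω^{p+q}A : Jξ = (p−q)·i·ξ}`. -/
def pq (C : AlmostComplexCalc Ω) (p q : ℕ) : Submodule ℂ Ω where
  carrier := {x | x ∈ C.G (p + q) ∧ C.J x = (((p : ℂ) - (q : ℂ)) * Complex.I) • x}
  add_mem' := by
    rintro x y ⟨hx1, hx2⟩ ⟨hy1, hy2⟩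
    refine ⟨(C.G (p + q)).add_mem hx1 hy1, ?_⟩
    rw [map_add, hx2, hy2, smul_add]
  zero_mem' := ⟨(C.G (p + q)).zero_mem, by rw [map_zero, smul_zero]⟩
  smul_mem' := by
    rintro c x ⟨hx1, hx2⟩
    refine ⟨(C.G (p + q)).smul_mem c hx1, ?_⟩
    rw [map_smul, hx2, smul_comm]

theorem mem_pq {C : AlmostComplexCalc Ω} {p q : ℕ} {x : Ω} :
    x ∈ C.pq p q ↔ x ∈ C.G (p + q) ∧ C.J x = (((p : ℂ) - (q : ℂ)) * Complex.I) • x :=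
  Iff.rfl

/-- Integrability of the almost complex structure:
`d(Ω^{1,0}A) ⊆ Ω^{2,0}A ⊕ Ω^{1,1}A`. -/
def Integrable (C : AlmostComplexCalc Ω) : Prop :=
  ∀ ω ∈ C.pq 1 0, C.d ω ∈ C.pq 2 0 ⊔ C.pq 1 1

end AlmostComplexCalc

/-- An almost complex structure together with the projections
`π^{p,q} : Ω^{p+q}A → Ω^{p,q}A` realizing the direct sum decomposition
`ΩⁿA = ⊕_{p+q=n} Ω^{p,q}A`. -/
structure ProjCalc (Ω : Type*) [Ring Ω] [Algebra ℂ Ω] extends AlmostComplexCalc Ω where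
  /-- the projection onto the `(p,q)`-summand -/
  π : ℕ → ℕ → (Ω →ₗ[ℂ] Ω)
  π_mem_grade : ∀ (p q : ℕ) (x : Ω), π p q x ∈ G (p + q)
  π_eigen : ∀ (p q : ℕ) (x : Ω),
      J (π p q x) = (((p : ℂ) - (q : ℂ)) * Complex.I) • π p q x
  π_eq_self : ∀ (p q : ℕ), ∀ x ∈ G (p + q),
      J x = (((p : ℂ) - (q : ℂ)) * Complex.I) • x → π p q x = x
  π_zero_of_ne : ∀ (p q n : ℕ), n ≠ p + q → ∀ x ∈ G n, π p q x = 0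
  π_orth : ∀ (p q p' q' : ℕ), (p, q) ≠ (p', q') → ∀ x ∈ G (p' + q'),
      J x = (((p' : ℂ) - (q' : ℂ)) * Complex.I) • x → π p q x = 0
  π_sum : ∀ (n : ℕ), ∀ x ∈ G n, x = ∑ k ∈ Finset.range (n + 1), π k (n - k) x

namespace ProjCalc

variable {Ω : Type*} [Ring Ω] [Algebra ℂ Ω] (C : ProjCalc Ω)

lemma starOp_zero : C.starOp 0 = 0 := by
  simpa using C.starOp_smul 0 0

lemma pq_grade {p q : ℕ} {x : Ω} (hx : x ∈ C.pq p q) : x ∈ C.G (p + q) :=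
  (AlmostComplexCalc.mem_pq.mp hx).1

lemma pq_eigen {p q : ℕ} {x : Ω} (hx : x ∈ C.pq p q) :
    C.J x = (((p : ℂ) - (q : ℂ)) * Complex.I) • x :=
  (AlmostComplexCalc.mem_pq.mp hx).2

lemma pq_mk {p q : ℕ} {x : Ω} (h1 : x ∈ C.G (p + q))
    (h2 : C.J x = (((p : ℂ) - (q : ℂ)) * Complex.I) • x) : x ∈ C.pq p q :=
  AlmostComplexCalc.mem_pq.mpr ⟨h1, h2⟩

lemma π_pq (p q : ℕ) (x : Ω) : C.π p q x ∈ C.pq p q :=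
  C.pq_mk (C.π_mem_grade p q x) (C.π_eigen p q x)

lemma π_pq_eq {p q : ℕ} {x : Ω} (hx : x ∈ C.pq p q) : C.π p q x = x :=
  C.π_eq_self p q x (C.pq_grade hx) (C.pq_eigen hx)

lemma π_pq_ne {p q p' q' : ℕ} (hne : (p, q) ≠ (p', q')) {x : Ω} (hx : x ∈ C.pq p' q') :
    C.π p q x = 0 :=
  C.π_orth p q p' q' hne x (C.pq_grade hx) (C.pq_eigen hx)

lemma decomp1 (x : Ω) (hx : x ∈ C.G 1) : x = C.π 0 1 x + C.π 1 0 x := by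
  have h := C.π_sum 1 x hx
  rw [Finset.sum_range_succ, Finset.sum_range_one] at h
  exact h

lemma decomp2 (x : Ω) (hx : x ∈ C.G 2) :
    x = C.π 0 2 x + C.π 1 1 x + C.π 2 0 x := by
  have h := C.π_sum 2 x hx
  rw [Finset.sum_range_succ, Finset.sum_range_succ, Finset.sum_range_one] at h
  exact h

lemma mul_pq {p q p' q' : ℕ} {x y : Ω} (hx : x ∈ C.pq p q) (hy : y ∈ C.pq p' q') :
    x * y ∈ C.pq (p + p') (q + q') := by
  refine C.pq_mk ?_ ?_
  · have h := C.mul_mem (C.pq_grade hx) (C.pq_grade hy)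
    have e : (p + p') + (q + q') = (p + q) + (p' + q') := by omega
    rwa [e]
  · rw [C.J_deriv, C.pq_eigen hx, C.pq_eigen hy, smul_mul_assoc, mul_smul_comm, ← add_smul]
    congr 1
    push_cast
    ring

lemma smul0_pq {p q : ℕ} {a x : Ω} (ha : a ∈ C.G 0) (hx : x ∈ C.pq p q) :
    a * x ∈ C.pq p q := by
  refine C.pq_mk ?_ ?_
  · have h := C.mul_mem ha (C.pq_grade hx)
    rwa [Nat.zero_add] at h
  · rw [C.J_deriv, C.J_zero a ha, zero_mul, zero_add, C.pq_eigen hx, mul_smul_comm]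

lemma π_mul_G1 (p q : ℕ) {a x : Ω} (ha : a ∈ C.G 0) (hx : x ∈ C.G 1) :
    C.π p q (a * x) = a * C.π p q x := by
  have hax : a * x ∈ C.G 1 := by
    have h := C.mul_mem ha hx; rwa [Nat.zero_add] at h
  by_cases h : p + q = 1
  · have h01 := C.π_pq 0 1 x
    have h10 := C.π_pq 1 0 x
    have key : C.π p q (a * x) = C.π p q (a * C.π 0 1 x) + C.π p q (a * C.π 1 0 x) := by
      conv_lhs => rw [C.decomp1 x hx]
      rw [mul_add, map_add]
    have hcase : (p = 0 ∧ q = 1) ∨ (p = 1 ∧ q = 0) := by omega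
    rcases hcase with ⟨rfl, rfl⟩ | ⟨rfl, rfl⟩
    · rw [key, C.π_pq_eq (C.smul0_pq ha h01),
        C.π_pq_ne (p := 0) (q := 1) (by decide) (C.smul0_pq ha h10), add_zero]
    · rw [key, C.π_pq_ne (p := 1) (q := 0) (by decide) (C.smul0_pq ha h01),
        C.π_pq_eq (C.smul0_pq ha h10), zero_add]
  · rw [C.π_zero_of_ne p q 1 (by omega) (a * x) hax, C.π_zero_of_ne p q 1 (by omega) x hx,
      mul_zero]

lemma π_mul_G2 (p q : ℕ) {a x : Ω} (ha : a ∈ C.G 0) (hx : x ∈ C.G 2) :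
    C.π p q (a * x) = a * C.π p q x := by
  have hax : a * x ∈ C.G 2 := by
    have h := C.mul_mem ha hx; rwa [Nat.zero_add] at h
  by_cases h : p + q = 2
  · have h02 := C.π_pq 0 2 x
    have h11 := C.π_pq 1 1 x
    have h20 := C.π_pq 2 0 x
    have key : C.π p q (a * x) =
        C.π p q (a * C.π 0 2 x) + C.π p q (a * C.π 1 1 x) + C.π p q (a * C.π 2 0 x) := by
      conv_lhs => rw [C.decomp2 x hx]
      rw [mul_add, mul_add, map_add, map_add]
    have hcase : (p = 0 ∧ q = 2) ∨ (p = 1 ∧ q = 1) ∨ (p = 2 ∧ q = 0) := by omega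
    rcases hcase with ⟨rfl, rfl⟩ | ⟨rfl, rfl⟩ | ⟨rfl, rfl⟩
    · rw [key, C.π_pq_eq (C.smul0_pq ha h02),
        C.π_pq_ne (p := 0) (q := 2) (by decide) (C.smul0_pq ha h11),
        C.π_pq_ne (p := 0) (q := 2) (by decide) (C.smul0_pq ha h20), add_zero, add_zero]
    · rw [key, C.π_pq_ne (p := 1) (q := 1) (by decide) (C.smul0_pq ha h02),
        C.π_pq_eq (C.smul0_pq ha h11),
        C.π_pq_ne (p := 1) (q := 1) (by decide) (C.smul0_pq ha h20), zero_add, add_zero]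
    · rw [key, C.π_pq_ne (p := 2) (q := 0) (by decide) (C.smul0_pq ha h02),
        C.π_pq_ne (p := 2) (q := 0) (by decide) (C.smul0_pq ha h11),
        C.π_pq_eq (C.smul0_pq ha h20), zero_add, zero_add]
  · rw [C.π_zero_of_ne p q 2 (by omega) (a * x) hax, C.π_zero_of_ne p q 2 (by omega) x hx,
      mul_zero]

lemma sup2011 {z : Ω} (hz : z ∈ C.G 2) :
    z ∈ C.pq 2 0 ⊔ C.pq 1 1 ↔ C.π 0 2 z = 0 := by
  constructor
  · intro h
    obtain ⟨u, hu, v, hv, rfl⟩ := Submodule.mem_sup.mp h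
    rw [map_add, C.π_pq_ne (p := 0) (q := 2) (by decide) hu,
      C.π_pq_ne (p := 0) (q := 2) (by decide) hv, add_zero]
  · intro h
    have hd := C.decomp2 z hz
    rw [h, zero_add] at hd
    rw [hd]
    exact add_mem (Submodule.mem_sup_right (C.π_pq 1 1 z)) (Submodule.mem_sup_left (C.π_pq 2 0 z))

lemma sup1102 {z : Ω} (hz : z ∈ C.G 2) :
    z ∈ C.pq 1 1 ⊔ C.pq 0 2 ↔ C.π 2 0 z = 0 := by
  constructor
  · intro h
    obtain ⟨u, hu, v, hv, rfl⟩ := Submodule.mem_sup.mp h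
    rw [map_add, C.π_pq_ne (p := 2) (q := 0) (by decide) hu,
      C.π_pq_ne (p := 2) (q := 0) (by decide) hv, add_zero]
  · intro h
    have hd := C.decomp2 z hz
    rw [h, add_zero] at hd
    rw [hd]
    exact add_mem (Submodule.mem_sup_right (C.π_pq 0 2 z)) (Submodule.mem_sup_left (C.π_pq 1 1 z))

end ProjCalc

namespace ProjCalc

variable {Ω : Type*} [Ring Ω] [Algebra ℂ Ω] (C : ProjCalc Ω)

/-- The ℂ-submodule of 2-forms on which `J` commutes with `starOp`. -/
def K2 : Submodule ℂ Ω where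
  carrier := {z | z ∈ C.G 2 ∧ C.J (C.starOp z) = C.starOp (C.J z)}
  add_mem' := by
    rintro x y ⟨hx1, hx2⟩ ⟨hy1, hy2⟩
    refine ⟨(C.G 2).add_mem hx1 hy1, ?_⟩
    rw [C.starOp_add, map_add, hx2, hy2, map_add, C.starOp_add]
  zero_mem' := by
    refine ⟨(C.G 2).zero_mem, ?_⟩
    rw [C.starOp_zero, map_zero, C.starOp_zero]
  smul_mem' := by
    rintro c x ⟨hx1, hx2⟩
    refine ⟨(C.G 2).smul_mem c hx1, ?_⟩
    rw [C.starOp_smul, map_smul, hx2, map_smul, C.starOp_smul]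

lemma mem_K2_iff {z : Ω} :
    z ∈ C.K2 ↔ z ∈ C.G 2 ∧ C.J (C.starOp z) = C.starOp (C.J z) := Iff.rfl

lemma dd_K2 {b c : Ω} (hb : b ∈ C.G 0) (hc : c ∈ C.G 0) : C.d b * C.d c ∈ C.K2 := by
  have hu : C.d b ∈ C.G 1 := C.d_mem 0 b hb
  have hv : C.d c ∈ C.G 1 := C.d_mem 0 c hc
  refine C.mem_K2_iff.mpr ⟨C.mul_mem hu hv, ?_⟩
  rw [C.starOp_mul 1 1 _ hu _ hv, C.J_deriv (C.d b) (C.d c), C.starOp_add,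
    C.starOp_mul 1 1 _ (C.J_mem 1 _ hu) _ hv, C.starOp_mul 1 1 _ hu _ (C.J_mem 1 _ hv)]
  simp only [show ((-1 : ℂ) ^ (1 * 1) : ℂ) = -1 from by norm_num, neg_one_smul]
  rw [map_neg, C.J_deriv (C.starOp (C.d c)) (C.starOp (C.d b)), C.J_star _ hv, C.J_star _ hu]
  abel

lemma mul0_K2 {a z : Ω} (ha : a ∈ C.G 0) (hz : z ∈ C.K2) : a * z ∈ C.K2 := by
  obtain ⟨hz1, hz2⟩ := C.mem_K2_iff.mp hz
  refine C.mem_K2_iff.mpr ⟨?_, ?_⟩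
  · have h := C.mul_mem ha hz1; rwa [Nat.zero_add] at h
  · rw [C.starOp_mul 0 2 a ha z hz1, C.J_deriv a z, C.J_zero a ha]
    simp only [zero_mul, zero_add]
    rw [C.starOp_mul 0 2 a ha _ (C.J_mem 2 z hz1)]
    simp only [Nat.zero_mul, pow_zero, one_smul]
    rw [C.J_deriv (C.starOp z) (C.starOp a), C.J_zero _ (C.starOp_mem 0 a ha), mul_zero,
      add_zero, hz2]

lemma d_G1_mem_K2 {x : Ω} (hx : x ∈ C.G 1) : C.d x ∈ C.K2 := by
  refine Submodule.span_induction ?_ ?_ ?_ ?_ (C.gen 0 hx)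
  · rintro w ⟨a, ha, y, hy, rfl⟩
    rw [C.leibniz 0 a ha (C.d y), C.d_d y, mul_zero, smul_zero, add_zero]
    exact C.dd_K2 ha hy
  · rw [map_zero]; exact zero_mem _
  · intro u v _ _ hu hv
    rw [map_add]; exact add_mem hu hv
  · intro t u _ hu
    rw [map_smul]; exact Submodule.smul_mem _ _ hu

lemma G2_mem_K2 {z : Ω} (hz : z ∈ C.G 2) : z ∈ C.K2 := by
  refine (Submodule.span_le.mpr ?_) (C.gen 1 hz)
  rintro w ⟨a, ha, x, hx, rfl⟩
  exact C.mul0_K2 ha (C.d_G1_mem_K2 hx)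

lemma Jstar2 {z : Ω} (hz : z ∈ C.G 2) : C.J (C.starOp z) = C.starOp (C.J z) :=
  (C.mem_K2_iff.mp (C.G2_mem_K2 hz)).2

lemma star_pq {p q : ℕ} {x : Ω} (hx : x ∈ C.pq p q)
    (hJ : C.J (C.starOp x) = C.starOp (C.J x)) : C.starOp x ∈ C.pq q p := by
  refine C.pq_mk ?_ ?_
  · have h := C.starOp_mem (p + q) x (C.pq_grade hx)
    rwa [Nat.add_comm p q] at h
  · rw [hJ, C.pq_eigen hx, C.starOp_smul]
    congr 1
    rw [map_mul, map_sub, Complex.conj_I, map_natCast, map_natCast]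
    ring

end ProjCalc

namespace ProjCalc

variable {Ω : Type*} [Ring Ω] [Algebra ℂ Ω] (C : ProjCalc Ω)

lemma one_to_four (h1 : ∀ a ∈ C.G 0, C.π 0 2 (C.d (C.π 0 1 (C.d a))) = 0) :
    ∀ ω ∈ C.pq 1 0, C.d ω ∈ C.pq 2 0 ⊔ C.pq 1 1 := by
  have key : ∀ x ∈ C.G 1, C.π 0 2 (C.d (C.π 1 0 x)) = 0 := by
    intro x hx
    refine Submodule.span_induction ?_ ?_ ?_ ?_ (C.gen 0 hx)
    · rintro w ⟨a, ha, b, hb, rfl⟩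
      have hdb : C.d b ∈ C.G 1 := C.d_mem 0 b hb
      have hda : C.d a ∈ C.G 1 := C.d_mem 0 a ha
      have h10 : C.π 1 0 (C.d b) ∈ C.pq 1 0 := C.π_pq 1 0 _
      rw [C.π_mul_G1 1 0 ha hdb, C.leibniz 0 a ha (C.π 1 0 (C.d b)), pow_zero, one_smul,
        map_add]
      have t1 : C.π 0 2 (C.d a * C.π 1 0 (C.d b)) = 0 := by
        conv_lhs => rw [C.decomp1 _ hda]
        rw [add_mul, map_add]
        have m1 : C.π 0 1 (C.d a) * C.π 1 0 (C.d b) ∈ C.pq 1 1 :=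
          C.mul_pq (C.π_pq 0 1 _) (C.π_pq 1 0 _)
        have m2 : C.π 1 0 (C.d a) * C.π 1 0 (C.d b) ∈ C.pq 2 0 :=
          C.mul_pq (C.π_pq 1 0 _) (C.π_pq 1 0 _)
        rw [C.π_pq_ne (p := 0) (q := 2) (by decide) m1,
          C.π_pq_ne (p := 0) (q := 2) (by decide) m2, add_zero]
      have t2 : C.π 0 2 (a * C.d (C.π 1 0 (C.d b))) = 0 := by
        rw [C.π_mul_G2 0 2 ha (C.d_mem 1 _ (C.pq_grade h10))]
        have hsum : C.d (C.π 0 1 (C.d b)) + C.d (C.π 1 0 (C.d b)) = 0 := by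
          rw [← map_add, ← C.decomp1 _ hdb, C.d_d]
        have hsplit : C.d (C.π 1 0 (C.d b)) = - C.d (C.π 0 1 (C.d b)) :=
          eq_neg_of_add_eq_zero_right hsum
        rw [hsplit, map_neg, h1 b hb, neg_zero, mul_zero]
      rw [t1, t2, add_zero]
    · simp
    · intro u v _ _ hu hv
      rw [map_add, map_add, map_add, hu, hv, add_zero]
    · intro t u _ hu
      rw [map_smul, map_smul, map_smul, hu, smul_zero]
  intro ω hω
  rw [C.sup2011 (C.d_mem 1 ω (C.pq_grade hω))]
  have h := key ω (C.pq_grade hω)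
  rwa [C.π_pq_eq hω] at h

lemma four_to_one (h4 : ∀ ω ∈ C.pq 1 0, C.d ω ∈ C.pq 2 0 ⊔ C.pq 1 1) :
    ∀ a ∈ C.G 0, C.π 0 2 (C.d (C.π 0 1 (C.d a))) = 0 := by
  intro a ha
  have hda : C.d a ∈ C.G 1 := C.d_mem 0 a ha
  have h10 : C.π 1 0 (C.d a) ∈ C.pq 1 0 := C.π_pq 1 0 _
  have hz : C.π 0 2 (C.d (C.π 1 0 (C.d a))) = 0 :=
    (C.sup2011 (C.d_mem 1 _ (C.pq_grade h10))).mp (h4 _ h10)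
  have hsum : C.d (C.π 0 1 (C.d a)) + C.d (C.π 1 0 (C.d a)) = 0 := by
    rw [← map_add, ← C.decomp1 _ hda, C.d_d]
  have hsplit : C.d (C.π 0 1 (C.d a)) = - C.d (C.π 1 0 (C.d a)) :=
    eq_neg_of_add_eq_zero_left hsum
  rw [hsplit, map_neg, hz, neg_zero]

lemma two_to_five (h2 : ∀ a ∈ C.G 0, C.π 2 0 (C.d (C.π 1 0 (C.d a))) = 0) :
    ∀ ω ∈ C.pq 0 1, C.d ω ∈ C.pq 1 1 ⊔ C.pq 0 2 := by
  have key : ∀ x ∈ C.G 1, C.π 2 0 (C.d (C.π 0 1 x)) = 0 := by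
    intro x hx
    refine Submodule.span_induction ?_ ?_ ?_ ?_ (C.gen 0 hx)
    · rintro w ⟨a, ha, b, hb, rfl⟩
      have hdb : C.d b ∈ C.G 1 := C.d_mem 0 b hb
      have hda : C.d a ∈ C.G 1 := C.d_mem 0 a ha
      have h01 : C.π 0 1 (C.d b) ∈ C.pq 0 1 := C.π_pq 0 1 _
      rw [C.π_mul_G1 0 1 ha hdb, C.leibniz 0 a ha (C.π 0 1 (C.d b)), pow_zero, one_smul,
        map_add]
      have t1 : C.π 2 0 (C.d a * C.π 0 1 (C.d b)) = 0 := by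
        conv_lhs => rw [C.decomp1 _ hda]
        rw [add_mul, map_add]
        have m1 : C.π 0 1 (C.d a) * C.π 0 1 (C.d b) ∈ C.pq 0 2 :=
          C.mul_pq (C.π_pq 0 1 _) (C.π_pq 0 1 _)
        have m2 : C.π 1 0 (C.d a) * C.π 0 1 (C.d b) ∈ C.pq 1 1 :=
          C.mul_pq (C.π_pq 1 0 _) (C.π_pq 0 1 _)
        rw [C.π_pq_ne (p := 2) (q := 0) (by decide) m1,
          C.π_pq_ne (p := 2) (q := 0) (by decide) m2, add_zero]
      have t2 : C.π 2 0 (a * C.d (C.π 0 1 (C.d b))) = 0 := by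
        rw [C.π_mul_G2 2 0 ha (C.d_mem 1 _ (C.pq_grade h01))]
        have hsum : C.d (C.π 0 1 (C.d b)) + C.d (C.π 1 0 (C.d b)) = 0 := by
          rw [← map_add, ← C.decomp1 _ hdb, C.d_d]
        have hsplit : C.d (C.π 0 1 (C.d b)) = - C.d (C.π 1 0 (C.d b)) :=
          eq_neg_of_add_eq_zero_left hsum
        rw [hsplit, map_neg, h2 b hb, neg_zero, mul_zero]
      rw [t1, t2, add_zero]
    · simp
    · intro u v _ _ hu hv
      rw [map_add, map_add, map_add, hu, hv, add_zero]
    · intro t u _ hu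
      rw [map_smul, map_smul, map_smul, hu, smul_zero]
  intro ω hω
  rw [C.sup1102 (C.d_mem 1 ω (C.pq_grade hω))]
  have h := key ω (C.pq_grade hω)
  rwa [C.π_pq_eq hω] at h

lemma five_to_two (h5 : ∀ ω ∈ C.pq 0 1, C.d ω ∈ C.pq 1 1 ⊔ C.pq 0 2) :
    ∀ a ∈ C.G 0, C.π 2 0 (C.d (C.π 1 0 (C.d a))) = 0 := by
  intro a ha
  have hda : C.d a ∈ C.G 1 := C.d_mem 0 a ha
  have h01 : C.π 0 1 (C.d a) ∈ C.pq 0 1 := C.π_pq 0 1 _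
  have hz : C.π 2 0 (C.d (C.π 0 1 (C.d a))) = 0 :=
    (C.sup1102 (C.d_mem 1 _ (C.pq_grade h01))).mp (h5 _ h01)
  have hsum : C.d (C.π 0 1 (C.d a)) + C.d (C.π 1 0 (C.d a)) = 0 := by
    rw [← map_add, ← C.decomp1 _ hda, C.d_d]
  have hsplit : C.d (C.π 1 0 (C.d a)) = - C.d (C.π 0 1 (C.d a)) :=
    eq_neg_of_add_eq_zero_right hsum
  rw [hsplit, map_neg, hz, neg_zero]

lemma four_to_five (h4 : ∀ ω ∈ C.pq 1 0, C.d ω ∈ C.pq 2 0 ⊔ C.pq 1 1) :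
    ∀ ω ∈ C.pq 0 1, C.d ω ∈ C.pq 1 1 ⊔ C.pq 0 2 := by
  intro ω hω
  have hstar : C.starOp ω ∈ C.pq 1 0 := C.star_pq hω (C.J_star ω (C.pq_grade hω))
  obtain ⟨u, hu, v, hv, huv⟩ := Submodule.mem_sup.mp (h4 _ hstar)
  have hu2 : C.starOp u ∈ C.pq 0 2 := C.star_pq hu (C.Jstar2 (C.pq_grade hu))
  have hv2 : C.starOp v ∈ C.pq 1 1 := C.star_pq hv (C.Jstar2 (C.pq_grade hv))
  have hdω : C.d ω = C.starOp u + C.starOp v := by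
    rw [← C.starOp_add, huv, C.starOp_d, C.starOp_starOp]
  rw [hdω]
  exact add_mem (Submodule.mem_sup_right hu2) (Submodule.mem_sup_left hv2)

lemma five_to_four (h5 : ∀ ω ∈ C.pq 0 1, C.d ω ∈ C.pq 1 1 ⊔ C.pq 0 2) :
    ∀ ω ∈ C.pq 1 0, C.d ω ∈ C.pq 2 0 ⊔ C.pq 1 1 := by
  intro ω hω
  have hstar : C.starOp ω ∈ C.pq 0 1 := C.star_pq hω (C.J_star ω (C.pq_grade hω))
  obtain ⟨u, hu, v, hv, huv⟩ := Submodule.mem_sup.mp (h5 _ hstar)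
  have hu2 : C.starOp u ∈ C.pq 1 1 := C.star_pq hu (C.Jstar2 (C.pq_grade hu))
  have hv2 : C.starOp v ∈ C.pq 2 0 := C.star_pq hv (C.Jstar2 (C.pq_grade hv))
  have hdω : C.d ω = C.starOp u + C.starOp v := by
    rw [← C.starOp_add, huv, C.starOp_d, C.starOp_starOp]
  rw [hdω]
  exact add_mem (Submodule.mem_sup_right hu2) (Submodule.mem_sup_left hv2)

lemma three_to_four
    (h3 : ∀ ω ∈ C.G 1, C.d ω =
      (C.π 2 0 (C.d (C.π 1 0 ω)) + C.π 1 1 (C.d (C.π 0 1 ω))) +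
      (C.π 1 1 (C.d (C.π 1 0 ω)) + C.π 0 2 (C.d (C.π 0 1 ω)))) :
    ∀ ω ∈ C.pq 1 0, C.d ω ∈ C.pq 2 0 ⊔ C.pq 1 1 := by
  intro ω hω
  have h := h3 ω (C.pq_grade hω)
  rw [C.π_pq_eq hω, C.π_pq_ne (p := 0) (q := 1) (by decide) hω] at h
  simp only [map_zero, add_zero] at h
  rw [h]
  exact add_mem (Submodule.mem_sup_left (C.π_pq 2 0 _)) (Submodule.mem_sup_right (C.π_pq 1 1 _))

lemma to_three (h4 : ∀ ω ∈ C.pq 1 0, C.d ω ∈ C.pq 2 0 ⊔ C.pq 1 1)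
    (h5 : ∀ ω ∈ C.pq 0 1, C.d ω ∈ C.pq 1 1 ⊔ C.pq 0 2) :
    ∀ ω ∈ C.G 1, C.d ω =
      (C.π 2 0 (C.d (C.π 1 0 ω)) + C.π 1 1 (C.d (C.π 0 1 ω))) +
      (C.π 1 1 (C.d (C.π 1 0 ω)) + C.π 0 2 (C.d (C.π 0 1 ω))) := by
  intro ω hω
  have h10 : C.π 1 0 ω ∈ C.pq 1 0 := C.π_pq 1 0 ω
  have h01 : C.π 0 1 ω ∈ C.pq 0 1 := C.π_pq 0 1 ω
  have hd10 : C.d (C.π 1 0 ω) ∈ C.G 2 := C.d_mem 1 _ (C.pq_grade h10)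
  have hd01 : C.d (C.π 0 1 ω) ∈ C.G 2 := C.d_mem 1 _ (C.pq_grade h01)
  have z1 : C.π 0 2 (C.d (C.π 1 0 ω)) = 0 := (C.sup2011 hd10).mp (h4 _ h10)
  have z2 : C.π 2 0 (C.d (C.π 0 1 ω)) = 0 := (C.sup1102 hd01).mp (h5 _ h01)
  have e1 : C.d (C.π 1 0 ω) = C.π 1 1 (C.d (C.π 1 0 ω)) + C.π 2 0 (C.d (C.π 1 0 ω)) := by
    have h := C.decomp2 _ hd10
    rwa [z1, zero_add] at h
  have e2 : C.d (C.π 0 1 ω) = C.π 0 2 (C.d (C.π 0 1 ω)) + C.π 1 1 (C.d (C.π 0 1 ω)) := by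
    have h := C.decomp2 _ hd01
    rwa [z2, add_zero] at h
  have e : C.d ω = C.d (C.π 0 1 ω) + C.d (C.π 1 0 ω) := by
    rw [← map_add]
    exact congrArg _ (C.decomp1 ω hω)
  rw [e]
  conv_lhs => rw [e1, e2]
  abel

end ProjCalc

/-- Let `J` be an almost complex structure on a differential
`*`-calculus `(Ω•A, d, *)` (with the projections `π^{p,q}` onto the `(p,q)`-summands,
and `∂ := π^{p+1,q}∘d`, `∂̄ := π^{p,q+1}∘d` on `Ω^{p,q}A`).  The following are
equivalent:
1. `∂̄² = 0` as an operator `A → Ω²A`;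
2. `∂² = 0` as an operator `A → Ω²A`;
3. `d = ∂ + ∂̄` as operators `Ω¹A → Ω²A`;
4. `d(Ω^{1,0}A) ⊆ Ω^{2,0}A ⊕ Ω^{1,1}A`;
5. `d(Ω^{0,1}A) ⊆ Ω^{1,1}A ⊕ Ω^{0,2}A`. -/
theorem statement4 {Ω : Type*} [Ring Ω] [Algebra ℂ Ω] (C : ProjCalc Ω) :
    List.TFAE
      [ -- (1) ∂̄² = 0 on A
        ∀ a ∈ C.G 0, C.π 0 2 (C.d (C.π 0 1 (C.d a))) = 0,
        -- (2) ∂² = 0 on A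
        ∀ a ∈ C.G 0, C.π 2 0 (C.d (C.π 1 0 (C.d a))) = 0,
        -- (3) d = ∂ + ∂̄ on Ω¹A
        ∀ ω ∈ C.G 1, C.d ω =
          (C.π 2 0 (C.d (C.π 1 0 ω)) + C.π 1 1 (C.d (C.π 0 1 ω))) +
          (C.π 1 1 (C.d (C.π 1 0 ω)) + C.π 0 2 (C.d (C.π 0 1 ω))),
        -- (4) d Ω^{1,0} ⊆ Ω^{2,0} ⊕ Ω^{1,1}
        ∀ ω ∈ C.pq 1 0, C.d ω ∈ C.pq 2 0 ⊔ C.pq 1 1,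
        -- (5) d Ω^{0,1} ⊆ Ω^{1,1} ⊕ Ω^{0,2}
        ∀ ω ∈ C.pq 0 1, C.d ω ∈ C.pq 1 1 ⊔ C.pq 0 2 ] := by
  tfae_have 1 → 4 := C.one_to_four
  tfae_have 4 → 1 := C.four_to_one
  tfae_have 2 → 5 := C.two_to_five
  tfae_have 5 → 2 := C.five_to_two
  tfae_have 4 → 5 := C.four_to_five
  tfae_have 5 → 4 := C.five_to_four
  tfae_have 3 → 4 := C.three_to_four
  tfae_have 4 → 3 := fun h4 => C.to_three h4 (C.four_to_five h4)
  tfae_finish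
end
end

section
/- Let J be an almost complex structure on a differential *-calculus (Ω•A, d, *). The following conditions are equivalent: (1) J is integrable, i.e. d(Ω^{1,0}A) ⊆ Ω^{2,0}A ⊕ Ω^{1,1}A; (2) J²dJ = −2Jd as operators Ω¹A → Ω²A; (3) J²d = 2JdJ as operators Ω¹A → Ω²A; (4) JdJd = 0 as an operator A → Ω²A. (Here J denotes the extension of J as a degree-zero derivation to Ω²A.) -/
noncomputable section

open scoped TensorProduct

namespace AlmostComplexCalc

variable {Ω : Type*} [Ring Ω] [Algebra ℂ Ω] (C : AlmostComplexCalc Ω)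

/-- The span of products of two 1-forms. -/
def twoSpan : Submodule ℂ Ω := C.G 1 * C.G 1

lemma J_twoSpan {x : Ω} (hx : x ∈ C.twoSpan) : C.J x ∈ C.twoSpan := by
  refine Submodule.mul_induction_on hx (fun m hm n hn => ?_) (fun a b ha hb => ?_)
  · rw [C.J_deriv]
    exact add_mem (Submodule.mul_mem_mul (C.J_mem 1 m hm) hn)
      (Submodule.mul_mem_mul hm (C.J_mem 1 n hn))
  · rw [map_add]; exact add_mem ha hb

lemma star_J_twoSpan {x : Ω} (hx : x ∈ C.twoSpan) :
    C.starOp (C.J x) = C.J (C.starOp x) := by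
  refine Submodule.mul_induction_on hx (fun m hm n hn => ?_) (fun a b ha hb => ?_)
  · have hJm := C.J_mem 1 m hm
    have hJn := C.J_mem 1 n hn
    rw [C.J_deriv, C.starOp_add, C.starOp_mul 1 1 (C.J m) hJm n hn,
      C.starOp_mul 1 1 m hm (C.J n) hJn, C.starOp_mul 1 1 m hm n hn, map_smul,
      C.J_deriv, C.J_star m hm, C.J_star n hn]
    module
  · rw [map_add, C.starOp_add, C.starOp_add, map_add, ha, hb]

lemma d_mem_twoSpan {ω : Ω} (hω : ω ∈ C.G 1) : C.d ω ∈ C.twoSpan := by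
  have hle : Submodule.span ℂ {z : Ω | ∃ a ∈ C.G 0, ∃ x ∈ C.G 0, z = a * C.d x}
      ≤ C.twoSpan.comap C.d := by
    rw [Submodule.span_le]
    rintro z ⟨a, ha, x, hx, rfl⟩
    simp only [SetLike.mem_coe, Submodule.mem_comap]
    rw [C.leibniz 0 a ha (C.d x), C.d_d x, mul_zero, smul_zero, add_zero]
    exact Submodule.mul_mem_mul (C.d_mem 0 a ha) (C.d_mem 0 x hx)
  exact hle (C.gen 0 hω)

lemma plus_eigen {ω : Ω} (hω : ω ∈ C.G 1) :
    C.J ((2⁻¹ : ℂ) • (ω - Complex.I • C.J ω))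
      = Complex.I • ((2⁻¹ : ℂ) • (ω - Complex.I • C.J ω)) := by
  rw [map_smul, map_sub, map_smul, C.J_sq ω hω]
  match_scalars <;> (ring_nf; try simp [Complex.I_sq]; try norm_num)

lemma minus_eigen {ω : Ω} (hω : ω ∈ C.G 1) :
    C.J ((2⁻¹ : ℂ) • (ω + Complex.I • C.J ω))
      = (-Complex.I) • ((2⁻¹ : ℂ) • (ω + Complex.I • C.J ω)) := by
  rw [map_smul, map_add, map_smul, C.J_sq ω hω]
  match_scalars <;> (ring_nf; try simp [Complex.I_sq]; try norm_num)

lemma plus_part (h : C.Integrable) {ω : Ω} (hω : ω ∈ C.G 1)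
    (he : C.J ω = Complex.I • ω) :
    C.J (C.J (C.d ω)) = (2 * Complex.I) • C.J (C.d ω) := by
  have hmem : ω ∈ C.pq 1 0 := by
    refine ⟨hω, ?_⟩
    rw [he]; norm_num
  obtain ⟨x, hx, y, hy, hxy⟩ := Submodule.mem_sup.mp (h ω hmem)
  have hJx : C.J x = (2 * Complex.I) • x := by
    have h2 := hx.2; rw [h2]; norm_num
  have hJy : C.J y = 0 := by
    have h2 := hy.2; rw [h2]; norm_num
  rw [← hxy, map_add, hJx, hJy, add_zero, map_smul, hJx]

lemma minus_part (h : C.Integrable) {ω : Ω} (hω : ω ∈ C.G 1)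
    (he : C.J ω = (-Complex.I) • ω) :
    C.J (C.J (C.d ω)) = (-(2 * Complex.I)) • C.J (C.d ω) := by
  have hσ1 : C.starOp ω ∈ C.G 1 := C.starOp_mem 1 ω hω
  have hσe : C.J (C.starOp ω) = Complex.I • C.starOp ω := by
    rw [C.J_star ω hω, he, C.starOp_smul]
    congr 1
    simp
  have key := C.plus_part h hσ1 hσe
  have hdσ : C.d (C.starOp ω) = C.starOp (C.d ω) := (C.starOp_d ω).symm
  have hS : C.d ω ∈ C.twoSpan := C.d_mem_twoSpan hω
  have c1 : C.J (C.d (C.starOp ω)) = C.starOp (C.J (C.d ω)) := by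
    rw [hdσ]; exact (C.star_J_twoSpan hS).symm
  have c2 : C.J (C.J (C.d (C.starOp ω))) = C.starOp (C.J (C.J (C.d ω))) := by
    rw [c1]; exact (C.star_J_twoSpan (C.J_twoSpan hS)).symm
  rw [c2, c1] at key
  have key2 := congrArg C.starOp key
  rw [C.starOp_starOp, C.starOp_smul, C.starOp_starOp] at key2
  rw [key2]
  congr 1
  simp [Complex.ext_iff]

lemma cond3_of_integrable (h : C.Integrable) :
    ∀ ω ∈ C.G 1, C.J (C.J (C.d ω)) = (2 : ℂ) • C.J (C.d (C.J ω)) := by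
  intro ω hω
  set p := (2⁻¹ : ℂ) • (ω - Complex.I • C.J ω) with hp
  set m := (2⁻¹ : ℂ) • (ω + Complex.I • C.J ω) with hm
  have hJω := C.J_mem 1 ω hω
  have hp1 : p ∈ C.G 1 :=
    Submodule.smul_mem _ _ (Submodule.sub_mem _ hω (Submodule.smul_mem _ _ hJω))
  have hm1 : m ∈ C.G 1 :=
    Submodule.smul_mem _ _ (Submodule.add_mem _ hω (Submodule.smul_mem _ _ hJω))
  have hep : C.J p = Complex.I • p := by rw [hp]; exact C.plus_eigen hω
  have hem : C.J m = (-Complex.I) • m := by rw [hm]; exact C.minus_eigen hω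
  have h1 := C.plus_part h hp1 hep
  have h2 := C.minus_part h hm1 hem
  have hωpm : ω = p + m := by rw [hp, hm]; module
  have hJsum : C.J ω = Complex.I • p + (-Complex.I) • m := by
    conv_lhs => rw [hωpm]
    rw [map_add, hep, hem]
  calc C.J (C.J (C.d ω)) = C.J (C.J (C.d p)) + C.J (C.J (C.d m)) := by
        conv_lhs => rw [hωpm]
        simp [map_add]
    _ = (2 * Complex.I) • C.J (C.d p) + (-(2 * Complex.I)) • C.J (C.d m) := by
        rw [h1, h2]
    _ = (2 : ℂ) • C.J (C.d (C.J ω)) := by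
        rw [hJsum]
        simp only [map_add, map_smul]
        module

lemma integrable_of_cond4 (h : ∀ a ∈ C.G 0, C.J (C.d (C.J (C.d a))) = 0) :
    C.Integrable := by
  intro ω hω
  obtain ⟨hω1, heig⟩ := hω
  have hω1' : ω ∈ C.G 1 := hω1
  have heigI : C.J ω = Complex.I • ω := by rw [heig]; norm_num
  set T : Ω →ₗ[ℂ] Ω :=
    C.d ∘ₗ ((2⁻¹ : ℂ) • (LinearMap.id - Complex.I • C.J)) with hT
  have hle : Submodule.span ℂ {z : Ω | ∃ a ∈ C.G 0, ∃ x ∈ C.G 0, z = a * C.d x}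
      ≤ (C.pq 2 0 ⊔ C.pq 1 1).comap T := by
    rw [Submodule.span_le]
    rintro z ⟨a, ha, b, hb, rfl⟩
    simp only [SetLike.mem_coe, Submodule.mem_comap]
    have hdb : C.d b ∈ C.G 1 := C.d_mem 0 b hb
    have hJdb : C.J (C.d b) ∈ C.G 1 := C.J_mem 1 _ hdb
    set η := (2⁻¹ : ℂ) • (C.d b - Complex.I • C.J (C.d b)) with hη
    have hη1 : η ∈ C.G 1 :=
      Submodule.smul_mem _ _ (Submodule.sub_mem _ hdb (Submodule.smul_mem _ _ hJdb))
    have hηe : C.J η = Complex.I • η := by rw [hη]; exact C.plus_eigen hdb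
    set ζ := C.d (C.J (C.d b)) with hζ
    have hζ2 : ζ ∈ C.G 2 := C.d_mem 1 _ hJdb
    have hda : C.d a ∈ C.G 1 := C.d_mem 0 a ha
    have hJda : C.J (C.d a) ∈ C.G 1 := C.J_mem 1 _ hda
    set p := (2⁻¹ : ℂ) • (C.d a - Complex.I • C.J (C.d a)) with hpd
    set q := (2⁻¹ : ℂ) • (C.d a + Complex.I • C.J (C.d a)) with hqd
    have hp1 : p ∈ C.G 1 :=
      Submodule.smul_mem _ _ (Submodule.sub_mem _ hda (Submodule.smul_mem _ _ hJda))
    have hq1 : q ∈ C.G 1 :=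
      Submodule.smul_mem _ _ (Submodule.add_mem _ hda (Submodule.smul_mem _ _ hJda))
    have hpe : C.J p = Complex.I • p := by rw [hpd]; exact C.plus_eigen hda
    have hqe : C.J q = (-Complex.I) • q := by rw [hqd]; exact C.minus_eigen hda
    have hda_sum : C.d a = p + q := by rw [hpd, hqd]; module
    clear_value η ζ p q
    -- compute T (a * d b)
    have hJadb : C.J (a * C.d b) = a * C.J (C.d b) := by
      rw [C.J_deriv, C.J_zero a ha, zero_mul, zero_add]
    have hdadb : C.d (a * C.d b) = C.d a * C.d b := by
      rw [C.leibniz 0 a ha (C.d b), C.d_d b, mul_zero, smul_zero, add_zero]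
    have hdaJdb : C.d (a * C.J (C.d b)) = C.d a * C.J (C.d b) + a * ζ := by
      rw [C.leibniz 0 a ha (C.J (C.d b)), hζ, pow_zero, one_smul]
    have hTval : T (a * C.d b)
        = p * η + q * η + (-(2⁻¹ * Complex.I)) • (a * ζ) := by
      rw [hT]
      simp only [LinearMap.comp_apply, LinearMap.smul_apply, LinearMap.sub_apply,
        LinearMap.id_apply, LinearMap.smul_apply]
      rw [hJadb, map_smul, map_sub, map_smul, hdadb, hdaJdb, hda_sum, hη]
      simp only [mul_sub, mul_smul_comm, smul_sub, smul_add, smul_smul, sub_mul,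
        smul_mul_assoc, add_mul]
      module
    rw [hTval]
    have h20 : p * η ∈ C.pq 2 0 := by
      refine ⟨?_, ?_⟩
      · have := C.mul_mem hp1 hη1; exact this
      rw [C.J_deriv, hpe, hηe, smul_mul_assoc, mul_smul_comm, ← add_smul]
      congr 1
      push_cast
      ring
    have h11 : q * η ∈ C.pq 1 1 := by
      refine ⟨?_, ?_⟩
      · have := C.mul_mem hq1 hη1; exact this
      rw [C.J_deriv, hqe, hηe, smul_mul_assoc, mul_smul_comm, ← add_smul]
      congr 1
      push_cast
      ring
    have h11' : a * ζ ∈ C.pq 1 1 := by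
      refine ⟨?_, ?_⟩
      · have := C.mul_mem ha hζ2; exact this
      rw [C.J_deriv, C.J_zero a ha, zero_mul, zero_add, hζ, h b hb, mul_zero]
      simp
    exact add_mem (add_mem (Submodule.mem_sup_left h20) (Submodule.mem_sup_right h11))
      (Submodule.smul_mem _ _ (Submodule.mem_sup_right h11'))
  have hPω : (2⁻¹ : ℂ) • (ω - Complex.I • C.J ω) = ω := by
    rw [heigI, smul_smul]
    match_scalars <;> (ring_nf; try simp [Complex.I_sq]; try norm_num)
  have hTω : T ω = C.d ω := by
    rw [hT]
    simp only [LinearMap.comp_apply, LinearMap.smul_apply, LinearMap.sub_apply,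
      LinearMap.id_apply, LinearMap.smul_apply]
    rw [hPω]
  have := hle (C.gen 0 hω1')
  rw [Submodule.mem_comap, hTω] at this
  exact this

end AlmostComplexCalc

/-- Let `J` be an almost complex structure on a differential
`*`-calculus `(Ω•A, d, *)` (with `J` extended as a degree-zero derivation to all of
`Ω•A`).  The following are equivalent:
1. `J` is integrable, i.e. `d(Ω^{1,0}A) ⊆ Ω^{2,0}A ⊕ Ω^{1,1}A`;
2. `J²dJ = −2Jd` as operators `Ω¹A → Ω²A`;
3. `J²d = 2JdJ` as operators `Ω¹A → Ω²A`;
4. `JdJd = 0` as an operator `A → Ω²A`. -/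
theorem statement5 {Ω : Type*} [Ring Ω] [Algebra ℂ Ω] (C : AlmostComplexCalc Ω) :
    List.TFAE
      [ -- (1) integrability
        C.Integrable,
        -- (2) J²dJ = −2Jd on Ω¹A
        ∀ ω ∈ C.G 1, C.J (C.J (C.d (C.J ω))) = (-2 : ℂ) • C.J (C.d ω),
        -- (3) J²d = 2JdJ on Ω¹A
        ∀ ω ∈ C.G 1, C.J (C.J (C.d ω)) = (2 : ℂ) • C.J (C.d (C.J ω)),
        -- (4) JdJd = 0 on A
        ∀ a ∈ C.G 0, C.J (C.d (C.J (C.d a))) = 0 ] := by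
  tfae_have 1 → 3 := fun h => C.cond3_of_integrable h
  tfae_have 3 → 2 := by
    intro h ω hω
    have h3 := h (C.J ω) (C.J_mem 1 ω hω)
    rw [C.J_sq ω hω] at h3
    simp only [map_neg, smul_neg] at h3
    rw [h3, neg_smul]
  tfae_have 2 → 3 := by
    intro h ω hω
    have h2 := h (C.J ω) (C.J_mem 1 ω hω)
    rw [C.J_sq ω hω] at h2
    simp only [map_neg] at h2
    refine neg_injective ?_
    rw [h2, neg_smul]
  tfae_have 3 → 4 := by
    intro h a ha
    have hda : C.d a ∈ C.G 1 := C.d_mem 0 a ha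
    have h3 := h (C.d a) hda
    rw [C.d_d a] at h3
    simp only [map_zero] at h3
    have : (2 : ℂ) • C.J (C.d (C.J (C.d a))) = 0 := h3.symm
    have h2 : (2 : ℂ) ≠ 0 := by norm_num
    exact (smul_eq_zero.mp this).resolve_left h2
  tfae_have 4 → 1 := fun h => C.integrable_of_cond4 h
  tfae_finish
end
end

section
/- Let J be an almost complex structure on a differential *-calculus (Ω•A, d, *). The operators J²dJ + 2Jd and J²d − 2JdJ, viewed as maps Ω¹A → Ω²A, are homomorphisms of left A-modules (and likewise of right A-modules). Consequently, J is integrable as soon as one of these operators vanishes on a set of left (or right) A-module generators of Ω¹A. -/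
noncomputable section

open scoped TensorProduct

/-- The operator `J²dJ + 2Jd : Ω•A → Ω•A`. -/
def opA {Ω : Type*} [Ring Ω] [Algebra ℂ Ω] (C : AlmostComplexCalc Ω) : Ω →ₗ[ℂ] Ω :=
  C.J ∘ₗ C.J ∘ₗ C.d ∘ₗ C.J + (2 : ℂ) • (C.J ∘ₗ C.d)

/-- The operator `J²d − 2JdJ : Ω•A → Ω•A`. -/
def opB {Ω : Type*} [Ring Ω] [Algebra ℂ Ω] (C : AlmostComplexCalc Ω) : Ω →ₗ[ℂ] Ω :=
  C.J ∘ₗ C.J ∘ₗ C.d - (2 : ℂ) • (C.J ∘ₗ C.d ∘ₗ C.J)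

section Aux

variable {Ω : Type*} [Ring Ω] [Algebra ℂ Ω] (C : AlmostComplexCalc Ω)

lemma opA_apply (x : Ω) :
    opA C x = C.J (C.J (C.d (C.J x))) + (2 : ℂ) • C.J (C.d x) := rfl

lemma opB_apply (x : Ω) :
    opB C x = C.J (C.J (C.d x)) - (2 : ℂ) • C.J (C.d (C.J x)) := rfl

lemma d_mul_left {a : Ω} (ha : a ∈ C.G 0) (y : Ω) :
    C.d (a * y) = C.d a * y + a * C.d y := by
  simpa using C.leibniz 0 a ha y

lemma d_mul_right {x : Ω} (hx : x ∈ C.G 1) (y : Ω) :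
    C.d (x * y) = C.d x * y - x * C.d y := by
  have := C.leibniz 1 x hx y
  simpa [sub_eq_add_neg] using this

lemma opA_mul_left {a ω : Ω} (ha : a ∈ C.G 0) (hω : ω ∈ C.G 1) :
    opA C (a * ω) = a * opA C ω := by
  have hJa : C.J a = 0 := C.J_zero a ha
  have hda : C.d a ∈ C.G 1 := C.d_mem 0 a ha
  have hJω : C.J (C.J ω) = -ω := C.J_sq ω hω
  have hJda : C.J (C.J (C.d a)) = -(C.d a) := C.J_sq _ hda
  have e1 : C.J (a * ω) = a * C.J ω := by
    rw [C.J_deriv, hJa, zero_mul, zero_add]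
  rw [opA_apply, opA_apply, e1, d_mul_left C ha (C.J ω), d_mul_left C ha ω]
  simp only [map_add, C.J_deriv, hJa, zero_mul, zero_add, hJω, hJda,
    mul_neg, neg_mul, map_neg, mul_add, mul_neg, smul_add, mul_smul_comm]
  module

lemma opB_mul_left {a ω : Ω} (ha : a ∈ C.G 0) (hω : ω ∈ C.G 1) :
    opB C (a * ω) = a * opB C ω := by
  have hJa : C.J a = 0 := C.J_zero a ha
  have hda : C.d a ∈ C.G 1 := C.d_mem 0 a ha
  have hJω : C.J (C.J ω) = -ω := C.J_sq ω hω
  have hJda : C.J (C.J (C.d a)) = -(C.d a) := C.J_sq _ hda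
  have e1 : C.J (a * ω) = a * C.J ω := by
    rw [C.J_deriv, hJa, zero_mul, zero_add]
  rw [opB_apply, opB_apply, e1, d_mul_left C ha (C.J ω), d_mul_left C ha ω]
  simp only [map_add, C.J_deriv, hJa, zero_mul, zero_add, hJω, hJda,
    mul_neg, neg_mul, map_neg, mul_add, mul_neg, smul_add, mul_smul_comm,
    mul_sub, smul_sub]
  module

lemma opA_mul_right {a ω : Ω} (ha : a ∈ C.G 0) (hω : ω ∈ C.G 1) :
    opA C (ω * a) = opA C ω * a := by
  have hJa : C.J a = 0 := C.J_zero a ha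
  have hda : C.d a ∈ C.G 1 := C.d_mem 0 a ha
  have hJω : C.J (C.J ω) = -ω := C.J_sq ω hω
  have hJda : C.J (C.J (C.d a)) = -(C.d a) := C.J_sq _ hda
  have hJωmem : C.J ω ∈ C.G 1 := C.J_mem 1 ω hω
  have e1 : C.J (ω * a) = C.J ω * a := by
    rw [C.J_deriv, hJa, mul_zero, add_zero]
  rw [opA_apply, opA_apply, e1, d_mul_right C hJωmem a, d_mul_right C hω a]
  simp only [map_add, map_sub, C.J_deriv, hJa, mul_zero, add_zero, hJω, hJda,
    mul_neg, neg_mul, map_neg, add_mul, neg_mul, smul_add, smul_sub, smul_neg,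
    smul_mul_assoc, sub_mul]
  module

lemma opB_mul_right {a ω : Ω} (ha : a ∈ C.G 0) (hω : ω ∈ C.G 1) :
    opB C (ω * a) = opB C ω * a := by
  have hJa : C.J a = 0 := C.J_zero a ha
  have hda : C.d a ∈ C.G 1 := C.d_mem 0 a ha
  have hJω : C.J (C.J ω) = -ω := C.J_sq ω hω
  have hJda : C.J (C.J (C.d a)) = -(C.d a) := C.J_sq _ hda
  have hJωmem : C.J ω ∈ C.G 1 := C.J_mem 1 ω hω
  have e1 : C.J (ω * a) = C.J ω * a := by
    rw [C.J_deriv, hJa, mul_zero, add_zero]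
  rw [opB_apply, opB_apply, e1, d_mul_right C hJωmem a, d_mul_right C hω a]
  simp only [map_add, map_sub, C.J_deriv, hJa, mul_zero, add_zero, hJω, hJda,
    mul_neg, neg_mul, map_neg, add_mul, neg_mul, smul_add, smul_sub, smul_neg,
    smul_mul_assoc, sub_mul]
  module

/-- The common eigen-relation implies integrability. -/
lemma integrable_of_rel
    (h : ∀ ω ∈ C.pq 1 0, C.J (C.J (C.d ω)) = (2 * Complex.I) • C.J (C.d ω)) :
    C.Integrable := by
  intro ω hω
  have hg := hω.1
  have hz : C.d ω ∈ C.G 2 := C.d_mem 1 ω hg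
  have hw : C.J (C.d ω) ∈ C.G 2 := C.J_mem 2 _ hz
  set z := C.d ω with hzdef
  set w := C.J z with hwdef
  have hJw : C.J w = (2 * Complex.I) • w := h ω hω
  refine Submodule.mem_sup.mpr
    ⟨(-(Complex.I) / 2) • w, ?_, (Complex.I / 2) • w + z, ?_, ?_⟩
  · refine ⟨(C.G (2 + 0)).smul_mem _ hw, ?_⟩
    rw [map_smul, hJw, smul_smul]
    match_scalars <;> (push_cast; ring)
  · refine ⟨(C.G (1 + 1)).add_mem ((C.G 2).smul_mem _ hw) hz, ?_⟩
    rw [map_add, map_smul, hJw, smul_smul, ← hwdef]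
    match_scalars
    · push_cast
      linear_combination Complex.I_mul_I
    · push_cast
      ring
  · match_scalars <;> ring

lemma J_pq10 {ω : Ω} (hω : ω ∈ C.pq 1 0) : C.J ω = Complex.I • ω := by
  have := hω.2
  simpa using this

lemma integrable_of_opA (h : ∀ ω ∈ C.G 1, opA C ω = 0) : C.Integrable := by
  refine integrable_of_rel C ?_
  intro ω hω
  have h0 := h ω (by simpa using hω.1)
  rw [opA_apply, J_pq10 C hω] at h0
  simp only [map_smul, smul_smul] at h0
  have h1 : Complex.I • C.J (C.J (C.d ω)) = (-2 : ℂ) • C.J (C.d ω) := by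
    linear_combination (norm := module) h0
  have h2 := congrArg (fun x => (-Complex.I) • x) h1
  simp only [smul_smul] at h2
  rw [show (-Complex.I) * Complex.I = (1 : ℂ) by linear_combination -Complex.I_mul_I,
    one_smul] at h2
  rw [h2]
  match_scalars
  ring

lemma integrable_of_opB (h : ∀ ω ∈ C.G 1, opB C ω = 0) : C.Integrable := by
  refine integrable_of_rel C ?_
  intro ω hω
  have h0 := h ω (by simpa using hω.1)
  rw [opB_apply, J_pq10 C hω] at h0
  simp only [map_smul, smul_smul] at h0
  rw [sub_eq_zero] at h0
  exact h0

end Aux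

/-- Let `J` be an almost complex structure on a differential
`*`-calculus `(Ω•A, d, *)`.  The operators `J²dJ + 2Jd` and `J²d − 2JdJ`, viewed as
maps `Ω¹A → Ω²A`, are homomorphisms of left `A`-modules (and likewise of right
`A`-modules).  Consequently, `J` is integrable as soon as one of these operators
vanishes on a set of left (or right) `A`-module generators of `Ω¹A`. -/
theorem statement6 {Ω : Type*} [Ring Ω] [Algebra ℂ Ω] (C : AlmostComplexCalc Ω) :
    -- left A-module homomorphisms
    (∀ a ∈ C.G 0, ∀ ω ∈ C.G 1,
        opA C (a * ω) = a * opA C ω ∧ opB C (a * ω) = a * opB C ω)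
    -- right A-module homomorphisms
    ∧ (∀ a ∈ C.G 0, ∀ ω ∈ C.G 1,
        opA C (ω * a) = opA C ω * a ∧ opB C (ω * a) = opB C ω * a)
    -- vanishing on left A-module generators of Ω¹A implies integrability
    ∧ (∀ S : Set Ω, S ⊆ (C.G 1 : Set Ω) →
        (∀ ω ∈ C.G 1, ω ∈ Submodule.span ℂ {z : Ω | ∃ a ∈ C.G 0, ∃ s ∈ S, z = a * s}) →
        ((∀ s ∈ S, opA C s = 0) ∨ (∀ s ∈ S, opB C s = 0)) → C.Integrable)
    -- vanishing on right A-module generators of Ω¹A implies integrability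
    ∧ (∀ S : Set Ω, S ⊆ (C.G 1 : Set Ω) →
        (∀ ω ∈ C.G 1, ω ∈ Submodule.span ℂ {z : Ω | ∃ a ∈ C.G 0, ∃ s ∈ S, z = s * a}) →
        ((∀ s ∈ S, opA C s = 0) ∨ (∀ s ∈ S, opB C s = 0)) → C.Integrable) := by
  refine ⟨fun a ha ω hω => ⟨opA_mul_left C ha hω, opB_mul_left C ha hω⟩,
    fun a ha ω hω => ⟨opA_mul_right C ha hω, opB_mul_right C ha hω⟩, ?_, ?_⟩
  · intro S hSsub hspan hvan
    rcases hvan with hv | hv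
    · refine integrable_of_opA C fun ω hω => ?_
      have h := hspan ω hω
      clear hω
      induction h using Submodule.span_induction with
      | mem x hx =>
        obtain ⟨a, ha, s, hs, rfl⟩ := hx
        rw [opA_mul_left C ha (hSsub hs), hv s hs, mul_zero]
      | zero => simp
      | add x y _ _ hx hy => rw [map_add, hx, hy, add_zero]
      | smul c x _ hx => rw [map_smul, hx, smul_zero]
    · refine integrable_of_opB C fun ω hω => ?_
      have h := hspan ω hω
      clear hω
      induction h using Submodule.span_induction with
      | mem x hx =>
        obtain ⟨a, ha, s, hs, rfl⟩ := hx
        rw [opB_mul_left C ha (hSsub hs), hv s hs, mul_zero]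
      | zero => simp
      | add x y _ _ hx hy => rw [map_add, hx, hy, add_zero]
      | smul c x _ hx => rw [map_smul, hx, smul_zero]
  · intro S hSsub hspan hvan
    rcases hvan with hv | hv
    · refine integrable_of_opA C fun ω hω => ?_
      have h := hspan ω hω
      clear hω
      induction h using Submodule.span_induction with
      | mem x hx =>
        obtain ⟨a, ha, s, hs, rfl⟩ := hx
        rw [opA_mul_right C ha (hSsub hs), hv s hs, zero_mul]
      | zero => simp
      | add x y _ _ hx hy => rw [map_add, hx, hy, add_zero]
      | smul c x _ hx => rw [map_smul, hx, smul_zero]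
    · refine integrable_of_opB C fun ω hω => ?_
      have h := hspan ω hω
      clear hω
      induction h using Submodule.span_induction with
      | mem x hx =>
        obtain ⟨a, ha, s, hs, rfl⟩ := hx
        rw [opB_mul_right C ha (hSsub hs), hv s hs, zero_mul]
      | zero => simp
      | add x y _ _ hx hy => rw [map_add, hx, hy, add_zero]
      | smul c x _ hx => rw [map_smul, hx, smul_zero]
end
end

section
/- Let J be an integrable almost complex structure on a differential *-calculus (Ω•A, d, *). Then d = ∂ + ∂̄ on all of Ω•A, and the operators ∂ and ∂̄ satisfy ∂² = 0, ∂∂̄ + ∂̄∂ = 0, and ∂̄² = 0. -/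
noncomputable section

open scoped TensorProduct

namespace Stmt8

open AlmostComplexCalc

variable {Ω : Type*} [Ring Ω] [Algebra ℂ Ω] (C : ProjCalc Ω)

theorem mem_G_cast {m n : ℕ} (h : m = n) {x : Ω} (hx : x ∈ C.G m) : x ∈ C.G n := h ▸ hx

theorem mem_pq_cast {p p' q q' : ℕ} (hp : p = p') (hq : q = q') {x : Ω}
    (hx : x ∈ C.pq p q) : x ∈ C.pq p' q' := hp ▸ hq ▸ hx

theorem sup_cast {a b c d a' b' c' d' : ℕ} (h1 : a = a') (h2 : b = b') (h3 : c = c')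
    (h4 : d = d') {x : Ω} (hx : x ∈ C.pq a b ⊔ C.pq c d) :
    x ∈ C.pq a' b' ⊔ C.pq c' d' := h1 ▸ h2 ▸ h3 ▸ h4 ▸ hx

theorem pq_mem_G {p q : ℕ} {x : Ω} (hx : x ∈ C.pq p q) : x ∈ C.G (p + q) :=
  (mem_pq.mp hx).1

theorem pq_eigen {p q : ℕ} {x : Ω} (hx : x ∈ C.pq p q) :
    C.J x = (((p : ℂ) - (q : ℂ)) * Complex.I) • x := (mem_pq.mp hx).2

theorem pq_mul {p q r s : ℕ} {x y : Ω} (hx : x ∈ C.pq p q) (hy : y ∈ C.pq r s) :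
    x * y ∈ C.pq (p + r) (q + s) := by
  refine mem_pq.mpr ⟨mem_G_cast C (by omega) (C.mul_mem (pq_mem_G C hx) (pq_mem_G C hy)), ?_⟩
  rw [C.J_deriv, pq_eigen C hx, pq_eigen C hy, smul_mul_assoc, mul_smul_comm, ← add_smul]
  congr 1
  push_cast
  ring

theorem a_pq {a : Ω} (ha : a ∈ C.G 0) : a ∈ C.pq 0 0 :=
  mem_pq.mpr ⟨ha, by rw [C.J_zero a ha]; simp⟩

theorem one_pq : (1 : Ω) ∈ C.pq 0 0 := a_pq C C.one_mem

theorem starOp_zero : C.starOp 0 = 0 := by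
  have h := C.starOp_smul 0 0
  simpa using h

theorem d_one : C.d (1 : Ω) = 0 := by
  have h := C.leibniz 0 1 C.one_mem 1
  simpa using h

theorem split1 {y : Ω} (hy : y ∈ C.G 1) :
    ∃ θ φ, θ ∈ C.pq 1 0 ∧ φ ∈ C.pq 0 1 ∧ y = θ + φ := by
  refine ⟨C.π 1 0 y, C.π 0 1 y, mem_pq.mpr ⟨C.π_mem_grade 1 0 y, C.π_eigen 1 0 y⟩,
    mem_pq.mpr ⟨C.π_mem_grade 0 1 y, C.π_eigen 0 1 y⟩, ?_⟩
  have h2 := C.π_sum 1 y hy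
  rw [Finset.sum_range_succ, Finset.sum_range_one] at h2
  norm_num at h2
  exact h2.trans (add_comm _ _)

/-- Words `d b₁ * (d b₂ * (⋯ * 1))` with `bᵢ ∈ A`. -/
inductive Word (C : ProjCalc Ω) : ℕ → Ω → Prop
  | one : Word C 0 1
  | cons {n : ℕ} {b w : Ω} : b ∈ C.G 0 → Word C n w → Word C (n + 1) (C.d b * w)

theorem word_mem_G {n : ℕ} {w : Ω} (h : Word C n w) : w ∈ C.G n := by
  induction h with
  | one => exact C.one_mem
  | cons hb _ ih => exact mem_G_cast C (by omega) (C.mul_mem (C.d_mem 0 _ hb) ih)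

theorem word_d {n : ℕ} {w : Ω} (h : Word C n w) : C.d w = 0 := by
  induction h with
  | one => exact d_one C
  | @cons n b w hb hw ih =>
    have hdb : C.d b ∈ C.G 1 := C.d_mem 0 b hb
    rw [C.leibniz 1 _ hdb w, C.d_d, ih, zero_mul, mul_zero, smul_zero, add_zero]

theorem word_Jstar {n : ℕ} {w : Ω} (h : Word C n w) :
    C.J (C.starOp w) = C.starOp (C.J w) := by
  induction h with
  | one =>
    have hs : C.starOp (1 : Ω) ∈ C.G 0 := C.starOp_mem 0 1 C.one_mem
    rw [C.J_zero 1 C.one_mem, starOp_zero C, C.J_zero _ hs]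
  | @cons n b w hb hw ih =>
    have hdb : C.d b ∈ C.G 1 := C.d_mem 0 b hb
    have hwG : w ∈ C.G n := word_mem_G C hw
    rw [C.starOp_mul 1 n _ hdb w hwG, map_smul, C.J_deriv, ih, C.J_star _ hdb,
      C.J_deriv, C.starOp_add, C.starOp_mul 1 n _ (C.J_mem 1 _ hdb) w hwG,
      C.starOp_mul 1 n _ hdb _ (C.J_mem n w hwG), smul_add]
    rw [add_comm]

theorem G_le_span_word (n : ℕ) :
    C.G n ≤ Submodule.span ℂ {z | ∃ a ∈ C.G 0, ∃ w, Word C n w ∧ z = a * w} := by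
  induction n with
  | zero =>
    intro x hx
    exact Submodule.subset_span ⟨x, hx, 1, Word.one, (mul_one x).symm⟩
  | succ n ih =>
    intro z hz
    refine Submodule.span_le.mpr ?_ (C.gen n hz)
    rintro _ ⟨a, ha, x, hx, rfl⟩
    have hx' := ih hx
    clear hx hz
    simp only [SetLike.mem_coe]
    induction hx' using Submodule.span_induction with
    | mem u hu =>
      obtain ⟨b, hb, w, hw, rfl⟩ := hu
      have hd : C.d (b * w) = C.d b * w := by
        rw [C.leibniz 0 b hb w, word_d C hw, mul_zero, smul_zero, add_zero]
      rw [hd]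
      exact Submodule.subset_span ⟨a, ha, _, Word.cons hb hw, rfl⟩
    | zero => rw [map_zero, mul_zero]; exact zero_mem _
    | add u v _ _ ihu ihv => rw [map_add, mul_add]; exact add_mem ihu ihv
    | smul c u _ ihu => rw [map_smul, mul_smul_comm]; exact Submodule.smul_mem _ _ ihu

/-- The set where `J` commutes with `star`, as a submodule. -/
def Kstar : Submodule ℂ Ω where
  carrier := {x | C.J (C.starOp x) = C.starOp (C.J x)}
  add_mem' := by
    intro x y hx hy
    simp only [Set.mem_setOf_eq] at *
    rw [C.starOp_add, map_add, hx, hy, map_add, C.starOp_add]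
  zero_mem' := by
    simp only [Set.mem_setOf_eq]
    rw [starOp_zero C, map_zero, starOp_zero C]
  smul_mem' := by
    intro c x hx
    simp only [Set.mem_setOf_eq] at *
    rw [C.starOp_smul, map_smul, hx, map_smul, C.starOp_smul]

theorem Jstar_G (n : ℕ) {x : Ω} (hx : x ∈ C.G n) :
    C.J (C.starOp x) = C.starOp (C.J x) := by
  suffices h : C.G n ≤ Kstar C from h hx
  refine le_trans (G_le_span_word C n) (Submodule.span_le.mpr ?_)
  rintro _ ⟨a, ha, w, hw, rfl⟩
  have hwG := word_mem_G C hw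
  show C.J (C.starOp (a * w)) = C.starOp (C.J (a * w))
  rw [C.starOp_mul 0 n a ha w hwG, zero_mul, pow_zero, one_smul, C.J_deriv,
    word_Jstar C hw, C.J_zero _ (C.starOp_mem 0 a ha), mul_zero, add_zero,
    C.J_deriv, C.J_zero a ha, zero_mul, zero_add,
    C.starOp_mul 0 n a ha _ (C.J_mem n w hwG), zero_mul, pow_zero, one_smul]

theorem star_pq {p q : ℕ} {x : Ω} (hx : x ∈ C.pq p q) : C.starOp x ∈ C.pq q p := by
  refine mem_pq.mpr ⟨mem_G_cast C (by omega) (C.starOp_mem _ x (pq_mem_G C hx)), ?_⟩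
  rw [Jstar_G C (p + q) (pq_mem_G C hx), pq_eigen C hx, C.starOp_smul]
  congr 1
  simp [map_mul, map_sub, Complex.conj_I]
  ring

end Stmt8

namespace Stmt8

variable {Ω : Type*} [Ring Ω] [Algebra ℂ Ω] (C : ProjCalc Ω)

open AlmostComplexCalc

theorem hint01 (hint : C.Integrable) {ω : Ω} (hω : ω ∈ C.pq 0 1) :
    C.d ω ∈ C.pq 1 1 ⊔ C.pq 0 2 := by
  obtain ⟨u, hu, v, hv, huv⟩ := Submodule.mem_sup.mp (hint _ (star_pq C hω))
  have hd : C.d ω = C.starOp u + C.starOp v := by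
    have h1 : C.d ω = C.starOp (C.d (C.starOp ω)) := by
      rw [← C.starOp_d, C.starOp_starOp]
    rw [h1, ← huv, C.starOp_add]
  rw [hd]
  exact Submodule.mem_sup.mpr ⟨C.starOp v, star_pq C hv, C.starOp u, star_pq C hu, add_comm _ _⟩

/-- Pure words of bidegree `(p, q)`: products of elements of `Ω^{1,0}` and `Ω^{0,1}`. -/
inductive Pure (C : ProjCalc Ω) : ℕ → ℕ → Ω → Prop
  | one : Pure C 0 0 1
  | holo {p q : ℕ} {ω w : Ω} : ω ∈ C.pq 1 0 → Pure C p q w → Pure C (p + 1) q (ω * w)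
  | anti {p q : ℕ} {ω w : Ω} : ω ∈ C.pq 0 1 → Pure C p q w → Pure C p (q + 1) (ω * w)

theorem pure_mem {p q : ℕ} {w : Ω} (h : Pure C p q w) : w ∈ C.pq p q := by
  induction h with
  | one => exact one_pq C
  | holo hω _ ih => exact mem_pq_cast C (by omega) (by omega) (pq_mul C hω ih)
  | anti hω _ ih => exact mem_pq_cast C (by omega) (by omega) (pq_mul C hω ih)

theorem mul_pq_sup {p q : ℕ} {x : Ω} (hx : x ∈ C.pq p q) {r₁ s₁ r₂ s₂ : ℕ} {y : Ω}
    (hy : y ∈ C.pq r₁ s₁ ⊔ C.pq r₂ s₂) :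
    x * y ∈ C.pq (p + r₁) (q + s₁) ⊔ C.pq (p + r₂) (q + s₂) := by
  obtain ⟨u, hu, v, hv, rfl⟩ := Submodule.mem_sup.mp hy
  exact Submodule.mem_sup.mpr
    ⟨x * u, pq_mul C hx hu, x * v, pq_mul C hx hv, (mul_add x u v).symm⟩

theorem d_pure (hint : C.Integrable) {p q : ℕ} {w : Ω} (h : Pure C p q w) :
    C.d w ∈ C.pq (p + 1) q ⊔ C.pq p (q + 1) := by
  induction h with
  | one => rw [d_one C]; exact zero_mem _
  | @holo p q ω w hω hw ih =>
    have hωG : ω ∈ C.G 1 := pq_mem_G C hω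
    rw [C.leibniz 1 ω hωG w]
    refine add_mem ?_ (Submodule.smul_mem _ _ ?_)
    · obtain ⟨u, hu, v, hv, huv⟩ := Submodule.mem_sup.mp (hint ω hω)
      rw [← huv, add_mul]
      refine add_mem (Submodule.mem_sup_left ?_) (Submodule.mem_sup_right ?_)
      · exact mem_pq_cast C (by omega) (by omega) (pq_mul C hu (pure_mem C hw))
      · exact mem_pq_cast C (by omega) (by omega) (pq_mul C hv (pure_mem C hw))
    · exact sup_cast C (by omega) (by omega) (by omega) (by omega) (mul_pq_sup C hω ih)
  | @anti p q ω w hω hw ih =>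
    have hωG : ω ∈ C.G 1 := pq_mem_G C hω
    rw [C.leibniz 1 ω hωG w]
    refine add_mem ?_ (Submodule.smul_mem _ _ ?_)
    · obtain ⟨u, hu, v, hv, huv⟩ := Submodule.mem_sup.mp (hint01 C hint hω)
      rw [← huv, add_mul]
      refine add_mem (Submodule.mem_sup_left ?_) (Submodule.mem_sup_right ?_)
      · exact mem_pq_cast C (by omega) (by omega) (pq_mul C hu (pure_mem C hw))
      · exact mem_pq_cast C (by omega) (by omega) (pq_mul C hv (pure_mem C hw))
    · exact sup_cast C (by omega) (by omega) (by omega) (by omega) (mul_pq_sup C hω ih)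

def pureSet (C : ProjCalc Ω) (n : ℕ) : Set Ω := {w | ∃ p q, p + q = n ∧ Pure C p q w}

theorem holo_mul_span {θ : Ω} (hθ : θ ∈ C.pq 1 0) {n : ℕ} {y : Ω}
    (hy : y ∈ Submodule.span ℂ (pureSet C n)) :
    θ * y ∈ Submodule.span ℂ (pureSet C (n + 1)) := by
  induction hy using Submodule.span_induction with
  | mem w hw =>
    obtain ⟨p, q, hpq, hpure⟩ := hw
    exact Submodule.subset_span ⟨p + 1, q, by omega, Pure.holo hθ hpure⟩
  | zero => rw [mul_zero]; exact zero_mem _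
  | add u v _ _ ihu ihv => rw [mul_add]; exact add_mem ihu ihv
  | smul c u _ ihu => rw [mul_smul_comm]; exact Submodule.smul_mem _ _ ihu

theorem anti_mul_span {θ : Ω} (hθ : θ ∈ C.pq 0 1) {n : ℕ} {y : Ω}
    (hy : y ∈ Submodule.span ℂ (pureSet C n)) :
    θ * y ∈ Submodule.span ℂ (pureSet C (n + 1)) := by
  induction hy using Submodule.span_induction with
  | mem w hw =>
    obtain ⟨p, q, hpq, hpure⟩ := hw
    exact Submodule.subset_span ⟨p, q + 1, by omega, Pure.anti hθ hpure⟩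
  | zero => rw [mul_zero]; exact zero_mem _
  | add u v _ _ ihu ihv => rw [mul_add]; exact add_mem ihu ihv
  | smul c u _ ihu => rw [mul_smul_comm]; exact Submodule.smul_mem _ _ ihu

theorem word_mem_pureSpan {n : ℕ} {w : Ω} (h : Word C n w) :
    w ∈ Submodule.span ℂ (pureSet C n) := by
  induction h with
  | one => exact Submodule.subset_span ⟨0, 0, rfl, Pure.one⟩
  | @cons n b w hb hw ih =>
    obtain ⟨θ, φ, hθ, hφ, hsplit⟩ := split1 C (C.d_mem 0 b hb)
    rw [hsplit, add_mul]
    exact add_mem (holo_mul_span C hθ ih) (anti_mul_span C hφ ih)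

def pmSet (C : ProjCalc Ω) (n : ℕ) : Set Ω :=
  {z | ∃ a ∈ C.G 0, ∃ p q, p + q = n ∧ ∃ w, Pure C p q w ∧ z = a * w}

theorem G_le_pmSpan (n : ℕ) : C.G n ≤ Submodule.span ℂ (pmSet C n) := by
  refine le_trans (G_le_span_word C n) (Submodule.span_le.mpr ?_)
  rintro _ ⟨a, ha, w, hw, rfl⟩
  simp only [SetLike.mem_coe]
  have h := word_mem_pureSpan C hw
  clear hw
  induction h using Submodule.span_induction with
  | mem u hu =>
    obtain ⟨p, q, hpq, hpure⟩ := hu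
    exact Submodule.subset_span ⟨a, ha, p, q, hpq, u, hpure, rfl⟩
  | zero => rw [mul_zero]; exact zero_mem _
  | add u v _ _ ihu ihv => rw [mul_add]; exact add_mem ihu ihv
  | smul c u _ ihu => rw [mul_smul_comm]; exact Submodule.smul_mem _ _ ihu

theorem pq_le_pureMonSpan (p q : ℕ) :
    C.pq p q ≤ Submodule.span ℂ {z | ∃ a ∈ C.G 0, ∃ w, Pure C p q w ∧ z = a * w} := by
  intro ξ hξ
  have hG : ξ ∈ C.G (p + q) := pq_mem_G C hξ
  have hproj : C.π p q ξ = ξ := C.π_eq_self p q ξ hG (pq_eigen C hξ)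
  rw [← hproj]
  have key : ∀ y ∈ Submodule.span ℂ (pmSet C (p + q)),
      C.π p q y ∈ Submodule.span ℂ {z | ∃ a ∈ C.G 0, ∃ w, Pure C p q w ∧ z = a * w} := by
    intro y hy
    induction hy using Submodule.span_induction with
    | mem u hu =>
      obtain ⟨a, ha, r, s, hrs, w, hpure, rfl⟩ := hu
      have hmem : a * w ∈ C.pq r s :=
        mem_pq_cast C (by omega) (by omega) (pq_mul C (a_pq C ha) (pure_mem C hpure))
      by_cases hc : (p, q) = (r, s)
      · rw [Prod.mk.injEq] at hc
        obtain ⟨rfl, rfl⟩ := hc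
        rw [C.π_eq_self p q _ (pq_mem_G C hmem) (pq_eigen C hmem)]
        exact Submodule.subset_span ⟨a, ha, w, hpure, rfl⟩
      · rw [C.π_orth p q r s hc _ (pq_mem_G C hmem) (pq_eigen C hmem)]
        exact zero_mem _
    | zero => rw [map_zero]; exact zero_mem _
    | add u v _ _ ihu ihv => rw [map_add]; exact add_mem ihu ihv
    | smul c u _ ihu => rw [map_smul]; exact Submodule.smul_mem _ _ ihu
  exact key ξ (G_le_pmSpan C (p + q) hG)

theorem d_pq_sup (hint : C.Integrable) {p q : ℕ} {ξ : Ω} (hξ : ξ ∈ C.pq p q) :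
    C.d ξ ∈ C.pq (p + 1) q ⊔ C.pq p (q + 1) := by
  have h := pq_le_pureMonSpan C p q hξ
  clear hξ
  induction h using Submodule.span_induction with
  | mem u hu =>
    obtain ⟨a, ha, w, hpure, rfl⟩ := hu
    rw [C.leibniz 0 a ha w, pow_zero, one_smul]
    refine add_mem ?_ ?_
    · obtain ⟨θ, φ, hθ, hφ, hsplit⟩ := split1 C (C.d_mem 0 a ha)
      rw [hsplit, add_mul]
      refine add_mem (Submodule.mem_sup_left ?_) (Submodule.mem_sup_right ?_)
      · exact mem_pq_cast C (by omega) (by omega) (pq_mul C hθ (pure_mem C hpure))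
      · exact mem_pq_cast C (by omega) (by omega) (pq_mul C hφ (pure_mem C hpure))
    · exact sup_cast C (by omega) (by omega) (by omega) (by omega)
        (mul_pq_sup C (a_pq C ha) (d_pure C hint hpure))
  | zero => rw [map_zero]; exact zero_mem _
  | add u v _ _ ihu ihv => rw [map_add]; exact add_mem ihu ihv
  | smul c u _ ihu => rw [map_smul]; exact Submodule.smul_mem _ _ ihu

theorem pair_ne {a b c d : ℕ} (h : a = c → b = d → False) : (a, b) ≠ (c, d) := by
  intro he
  exact h (congrArg Prod.fst he) (congrArg Prod.snd he)

theorem π_of_pq_eq {p q : ℕ} {x : Ω} (hx : x ∈ C.pq p q) : C.π p q x = x :=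
  C.π_eq_self p q x (pq_mem_G C hx) (pq_eigen C hx)

theorem π_of_pq_ne {p q r s : ℕ} (h : p = r → q = s → False) {x : Ω} (hx : x ∈ C.pq r s) :
    C.π p q x = 0 :=
  C.π_orth p q r s (pair_ne h) x (pq_mem_G C hx) (pq_eigen C hx)

end Stmt8

/-- Let `J` be an integrable almost complex structure on a
differential `*`-calculus `(Ω•A, d, *)`.  Then `d = ∂ + ∂̄` on all of `Ω•A`, and the
operators `∂` and `∂̄` satisfy `∂² = 0`, `∂∂̄ + ∂̄∂ = 0`, and `∂̄² = 0`.
(Everything is stated on the `(p,q)`-summands `Ω^{p,q}A`, where `∂ = π^{p+1,q}∘d` and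
`∂̄ = π^{p,q+1}∘d`; this covers all of `Ω•A` since `ΩⁿA = ⊕_{p+q=n} Ω^{p,q}A`.) -/
theorem statement8 {Ω : Type*} [Ring Ω] [Algebra ℂ Ω] (C : ProjCalc Ω)
    (hint : C.Integrable) :
    ∀ (p q : ℕ), ∀ ξ ∈ C.pq p q,
      -- d = ∂ + ∂̄
      (C.d ξ = C.π (p + 1) q (C.d ξ) + C.π p (q + 1) (C.d ξ))
      -- ∂² = 0
      ∧ (C.π (p + 2) q (C.d (C.π (p + 1) q (C.d ξ))) = 0)
      -- ∂∂̄ + ∂̄∂ = 0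
      ∧ (C.π (p + 1) (q + 1) (C.d (C.π (p + 1) q (C.d ξ)))
          + C.π (p + 1) (q + 1) (C.d (C.π p (q + 1) (C.d ξ))) = 0)
      -- ∂̄² = 0
      ∧ (C.π p (q + 2) (C.d (C.π p (q + 1) (C.d ξ))) = 0) := by
  intro p q ξ hξ
  obtain ⟨u, hu, v, hv, huv⟩ := Submodule.mem_sup.mp (Stmt8.d_pq_sup C hint hξ)
  have hπu : C.π (p + 1) q (C.d ξ) = u := by
    rw [← huv, map_add, Stmt8.π_of_pq_eq C hu, Stmt8.π_of_pq_ne C (by omega) hv, add_zero]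
  have hπv : C.π p (q + 1) (C.d ξ) = v := by
    rw [← huv, map_add, Stmt8.π_of_pq_ne C (by omega) hu, Stmt8.π_of_pq_eq C hv, zero_add]
  obtain ⟨s, hs, t, ht, hst⟩ := Submodule.mem_sup.mp (Stmt8.d_pq_sup C hint hu)
  obtain ⟨s', hs', t', ht', hst'⟩ := Submodule.mem_sup.mp (Stmt8.d_pq_sup C hint hv)
  have hs2 : s ∈ C.pq (p + 2) q := Stmt8.mem_pq_cast C (by omega) rfl hs
  have ht2 : t' ∈ C.pq p (q + 2) := Stmt8.mem_pq_cast C rfl (by omega) ht'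
  have hzero : s + t + (s' + t') = 0 := by
    have h0 : C.d u + C.d v = 0 := by rw [← map_add, huv, C.d_d]
    rw [← hst, ← hst'] at h0
    exact h0
  refine ⟨by rw [hπu, hπv, ← huv], ?_, ?_, ?_⟩
  · rw [hπu, ← hst, map_add, Stmt8.π_of_pq_eq C hs2, Stmt8.π_of_pq_ne C (by omega) ht,
      add_zero]
    have h := congrArg (C.π (p + 2) q) hzero
    simp only [map_add, map_zero] at h
    rw [Stmt8.π_of_pq_eq C hs2, Stmt8.π_of_pq_ne C (by omega) ht,
      Stmt8.π_of_pq_ne C (by omega) hs', Stmt8.π_of_pq_ne C (by omega) ht2] at h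
    simpa using h
  · rw [hπu, hπv, ← hst, ← hst']
    simp only [map_add]
    rw [Stmt8.π_of_pq_ne C (by omega) hs2, Stmt8.π_of_pq_eq C ht,
      Stmt8.π_of_pq_eq C hs', Stmt8.π_of_pq_ne C (by omega) ht2]
    have h := congrArg (C.π (p + 1) (q + 1)) hzero
    simp only [map_add, map_zero] at h
    rw [Stmt8.π_of_pq_ne C (by omega) hs2, Stmt8.π_of_pq_eq C ht,
      Stmt8.π_of_pq_eq C hs', Stmt8.π_of_pq_ne C (by omega) ht2] at h
    simpa using h
  · rw [hπv, ← hst', map_add, Stmt8.π_of_pq_ne C (by omega) hs', Stmt8.π_of_pq_eq C ht2,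
      zero_add]
    have h := congrArg (C.π p (q + 2)) hzero
    simp only [map_add, map_zero] at h
    rw [Stmt8.π_of_pq_ne C (by omega) hs2, Stmt8.π_of_pq_ne C (by omega) ht,
      Stmt8.π_of_pq_ne C (by omega) hs', Stmt8.π_of_pq_eq C ht2] at h
    simpa using h
end
end

section
/- Let J be an integrable almost complex structure on a differential *-calculus (Ω•A, d, *), let E be a left A-module, and let ∇ : E → Ω¹A ⊗_A E be a connection. Then ∇̄ := (π^{0,1} ⊗ id_E)∘∇ : E → Ω^{0,1}A ⊗_A E is a ∂̄-operator on E, and its holomorphic curvature satisfies ∇̄² = (π^{0,2} ⊗ id_E)∘∇² : E → Ω^{0,2}A ⊗_A E. In particular, if the (0,2)-component of the curvature ∇² vanishes, then (E, ∇̄) is a holomorphic left A-module. -/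
noncomputable section

open scoped TensorProduct

section TensorMachinery

variable {Ω : Type*} [Ring Ω] [Algebra ℂ Ω]

/-- The data of a left `A`-module structure on `E`, where `A = G 0` is the degree-zero
part of the calculus: a bilinear action of `Ω` on `E` which is unital and associative
on `A`. -/
structure AModData (C : ProjCalc Ω) (E : Type*) [AddCommGroup E] [Module ℂ E] where
  act : Ω →ₗ[ℂ] E →ₗ[ℂ] E
  act_one : ∀ e : E, act 1 e = e
  act_mul : ∀ a ∈ C.G 0, ∀ b ∈ C.G 0, ∀ e : E, act (a * b) e = act a (act b e)

/-- The subspace of relations defining the balanced tensor product `Ω•A ⊗_A E`. -/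
def relSub (C : ProjCalc Ω) {E : Type*} [AddCommGroup E] [Module ℂ E]
    (M : AModData C E) : Submodule ℂ (Ω ⊗[ℂ] E) :=
  Submodule.span ℂ
    {z : Ω ⊗[ℂ] E | ∃ a ∈ C.G 0, ∃ x : Ω, ∃ e : E,
      z = (x * a) ⊗ₜ[ℂ] e - x ⊗ₜ[ℂ] (M.act a e)}

/-- The balanced tensor product `Ω•A ⊗_A E`. -/
abbrev TP (C : ProjCalc Ω) {E : Type*} [AddCommGroup E] [Module ℂ E]
    (M : AModData C E) :=
  (Ω ⊗[ℂ] E) ⧸ relSub C M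

/-- The class of the elementary tensor `x ⊗ e` in `Ω•A ⊗_A E`. -/
def tp (C : ProjCalc Ω) {E : Type*} [AddCommGroup E] [Module ℂ E]
    (M : AModData C E) (x : Ω) (e : E) : TP C M :=
  Submodule.Quotient.mk (x ⊗ₜ[ℂ] e)

/-- Left multiplication (wedging on the left) by `ξ ∈ Ω•A` on `Ω•A ⊗_A E`. -/
def lmulTP (C : ProjCalc Ω) {E : Type*} [AddCommGroup E] [Module ℂ E]
    (M : AModData C E) (ξ : Ω) : TP C M →ₗ[ℂ] TP C M :=
  Submodule.mapQ (relSub C M) (relSub C M)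
    (LinearMap.rTensor E (LinearMap.mulLeft ℂ ξ)) (by
      unfold relSub
      refine Submodule.span_le.mpr ?_
      rintro z ⟨a, ha, x, e, rfl⟩
      simp only [SetLike.mem_coe, Submodule.mem_comap, map_sub, LinearMap.rTensor_tmul,
        LinearMap.mulLeft_apply]
      rw [show ξ * (x * a) = (ξ * x) * a from (mul_assoc ξ x a).symm]
      exact Submodule.subset_span ⟨a, ha, ξ * x, e, rfl⟩)

/-- The map `Ω•A ⊗_A E → Ω•A ⊗_A F` induced by an `A`-module map `φ : E → F`. -/
def TPmap (C : ProjCalc Ω) {E F : Type*} [AddCommGroup E] [Module ℂ E]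
    [AddCommGroup F] [Module ℂ F] (M : AModData C E) (N : AModData C F)
    (φ : E →ₗ[ℂ] F) (hφ : ∀ a ∈ C.G 0, ∀ e : E, φ (M.act a e) = N.act a (φ e)) :
    TP C M →ₗ[ℂ] TP C N :=
  Submodule.mapQ (relSub C M) (relSub C N) (LinearMap.lTensor Ω φ) (by
    unfold relSub
    refine Submodule.span_le.mpr ?_
    rintro z ⟨a, ha, x, e, rfl⟩
    simp only [SetLike.mem_coe, Submodule.mem_comap, map_sub, LinearMap.lTensor_tmul]
    rw [hφ a ha]
    exact Submodule.subset_span ⟨a, ha, x, φ e, rfl⟩)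

/-- The image of `Ω^{0,q}A ⊗_A E` inside `Ω•A ⊗_A E`. -/
def TPdeg (C : ProjCalc Ω) {E : Type*} [AddCommGroup E] [Module ℂ E]
    (M : AModData C E) (q : ℕ) : Submodule ℂ (TP C M) :=
  Submodule.span ℂ {z : TP C M | ∃ ξ ∈ C.pq 0 q, ∃ e : E, z = tp C M ξ e}

/-- The image of `ΩⁿA ⊗_A E` inside `Ω•A ⊗_A E`. -/
def TPdegTot (C : ProjCalc Ω) {E : Type*} [AddCommGroup E] [Module ℂ E]
    (M : AModData C E) (n : ℕ) : Submodule ℂ (TP C M) :=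
  Submodule.span ℂ {z : TP C M | ∃ x ∈ C.G n, ∃ e : E, z = tp C M x e}

/-- A `∂̄`-operator on a left `A`-module `E`: a ℂ-linear map
`∇̄ : E → Ω^{0,1}A ⊗_A E` with `∇̄(a·e) = ∂̄a ⊗ e + a·∇̄e` for all `a ∈ A`. -/
structure DbarOp (C : ProjCalc Ω) {E : Type*} [AddCommGroup E] [Module ℂ E]
    (M : AModData C E) where
  nabla : E →ₗ[ℂ] TP C M
  mem_deg : ∀ e : E, nabla e ∈ TPdeg C M 1
  leibniz : ∀ a ∈ C.G 0, ∀ e : E,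
      nabla (M.act a e) = tp C M (C.π 0 1 (C.d a)) e + lmulTP C M a (nabla e)

/-- The extension of a `∂̄`-operator to the higher degree parts
`Ω^{0,q}A ⊗_A E → Ω^{0,q+1}A ⊗_A E`, characterized by
`∇̄(ξ⊗e) = ∂̄ξ ⊗ e + (−1)^q ξ ∧ ∇̄e`. -/
structure DbarExt (C : ProjCalc Ω) {E : Type*} [AddCommGroup E] [Module ℂ E]
    {M : AModData C E} (D : DbarOp C M) where
  N : ℕ → (TP C M →ₗ[ℂ] TP C M)
  compat : ∀ (q : ℕ), ∀ ξ ∈ C.pq 0 q, ∀ e : E,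
      N q (tp C M ξ e) = tp C M (C.π 0 (q + 1) (C.d ξ)) e
        + ((-1 : ℂ) ^ q) • lmulTP C M ξ (D.nabla e)

end TensorMachinery


section Aux16

variable {Ω : Type*} [Ring Ω] [Algebra ℂ Ω]

lemma aux_pq_mul (C : ProjCalc Ω) {p q p' q' r s : ℕ} {x y : Ω}
    (hr : p + p' = r) (hs : q + q' = s)
    (hx : x ∈ C.pq p q) (hy : y ∈ C.pq p' q') :
    x * y ∈ C.pq r s := by
  subst hr hs
  obtain ⟨hx1, hx2⟩ := hx
  obtain ⟨hy1, hy2⟩ := hy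
  constructor
  · have h : p + p' + (q + q') = (p + q) + (p' + q') := by ring
    rw [h]
    exact C.mul_mem hx1 hy1
  · rw [C.J_deriv, hx2, hy2, smul_mul_assoc, mul_smul_comm, ← add_smul]
    congr 1
    push_cast
    ring

lemma aux_pi_mem_pq (C : ProjCalc Ω) (p q : ℕ) (x : Ω) : C.π p q x ∈ C.pq p q :=
  ⟨C.π_mem_grade p q x, C.π_eigen p q x⟩

lemma aux_decomp1 (C : ProjCalc Ω) {x : Ω} (hx : x ∈ C.G 1) :
    x = C.π 0 1 x + C.π 1 0 x := by
  have h := C.π_sum 1 x hx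
  simpa [Finset.sum_range_succ] using h

lemma aux_mem_pq00 (C : ProjCalc Ω) {a : Ω} (ha : a ∈ C.G 0) : a ∈ C.pq 0 0 :=
  ⟨ha, by rw [C.J_zero a ha]; simp⟩

lemma aux_pi01_mul (C : ProjCalc Ω) {a ξ : Ω} (ha : a ∈ C.G 0) (hξ : ξ ∈ C.G 1) :
    C.π 0 1 (a * ξ) = a * C.π 0 1 ξ := by
  have h01 : a * C.π 0 1 ξ ∈ C.pq 0 1 :=
    aux_pq_mul C (by norm_num) (by norm_num) (aux_mem_pq00 C ha) (aux_pi_mem_pq C 0 1 ξ)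
  have h10 : a * C.π 1 0 ξ ∈ C.pq 1 0 :=
    aux_pq_mul C (by norm_num) (by norm_num) (aux_mem_pq00 C ha) (aux_pi_mem_pq C 1 0 ξ)
  conv_lhs => rw [aux_decomp1 C hξ]
  rw [mul_add, map_add,
    C.π_eq_self 0 1 _ h01.1 h01.2,
    C.π_orth 0 1 1 0 (by decide) _ h10.1 h10.2, add_zero]

lemma aux_pi02_mul (C : ProjCalc Ω) {ξ η : Ω} (hξ : ξ ∈ C.G 1) (hη : η ∈ C.G 1) :
    C.π 0 2 (ξ * η) = C.π 0 1 ξ * C.π 0 1 η := by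
  have h0101 : C.π 0 1 ξ * C.π 0 1 η ∈ C.pq 0 2 :=
    aux_pq_mul C (by norm_num) (by norm_num) (aux_pi_mem_pq C 0 1 ξ) (aux_pi_mem_pq C 0 1 η)
  have h0110 : C.π 0 1 ξ * C.π 1 0 η ∈ C.pq 1 1 :=
    aux_pq_mul C (by norm_num) (by norm_num) (aux_pi_mem_pq C 0 1 ξ) (aux_pi_mem_pq C 1 0 η)
  have h1001 : C.π 1 0 ξ * C.π 0 1 η ∈ C.pq 1 1 :=
    aux_pq_mul C (by norm_num) (by norm_num) (aux_pi_mem_pq C 1 0 ξ) (aux_pi_mem_pq C 0 1 η)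
  have h1010 : C.π 1 0 ξ * C.π 1 0 η ∈ C.pq 2 0 :=
    aux_pq_mul C (by norm_num) (by norm_num) (aux_pi_mem_pq C 1 0 ξ) (aux_pi_mem_pq C 1 0 η)
  conv_lhs => rw [aux_decomp1 C hξ, aux_decomp1 C hη]
  rw [add_mul, mul_add, mul_add, map_add, map_add, map_add,
    C.π_eq_self 0 2 _ h0101.1 h0101.2,
    C.π_orth 0 2 1 1 (by decide) _ h0110.1 h0110.2,
    C.π_orth 0 2 1 1 (by decide) _ h1001.1 h1001.2,
    C.π_orth 0 2 2 0 (by decide) _ h1010.1 h1010.2]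
  abel

lemma aux_pi02_d (C : ProjCalc Ω) (hint : C.Integrable) {ξ : Ω} (hξ : ξ ∈ C.G 1) :
    C.π 0 2 (C.d ξ) = C.π 0 2 (C.d (C.π 0 1 ξ)) := by
  have h10 := hint _ (aux_pi_mem_pq C 1 0 ξ)
  obtain ⟨y, hy, z, hz, hyz⟩ := Submodule.mem_sup.mp h10
  conv_lhs => rw [aux_decomp1 C hξ]
  rw [map_add, map_add, ← hyz, map_add,
    C.π_orth 0 2 2 0 (by decide) _ hy.1 hy.2,
    C.π_orth 0 2 1 1 (by decide) _ hz.1 hz.2, add_zero, add_zero]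

lemma aux_tp_add (C : ProjCalc Ω) {E : Type*} [AddCommGroup E] [Module ℂ E]
    (M : AModData C E) (x y : Ω) (e : E) :
    tp C M (x + y) e = tp C M x e + tp C M y e := by
  simp [tp, TensorProduct.add_tmul]

lemma aux_lmulTP_tp (C : ProjCalc Ω) {E : Type*} [AddCommGroup E] [Module ℂ E]
    (M : AModData C E) (ξ x : Ω) (e : E) :
    lmulTP C M ξ (tp C M x e) = tp C M (ξ * x) e := by
  simp [lmulTP, tp, Submodule.mapQ_apply]

lemma aux_degTot_induction (C : ProjCalc Ω) {E : Type*} [AddCommGroup E] [Module ℂ E]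
    (M : AModData C E) {P : TP C M → Prop}
    (hgen : ∀ x ∈ C.G 1, ∀ e : E, P (tp C M x e)) (h0 : P 0)
    (hadd : ∀ u v, P u → P v → P (u + v))
    (hsmul : ∀ (c : ℂ) u, P u → P (c • u)) :
    ∀ z ∈ TPdegTot C M 1, P z := by
  intro z hz
  refine Submodule.span_induction ?_ h0 (fun u v _ _ => hadd u v)
    (fun c u _ => hsmul c u) hz
  rintro w ⟨x, hx, e, rfl⟩
  exact hgen x hx e

end Aux16

/-- Let `J` be an integrable almost complex structure on a
differential `*`-calculus `(Ω•A, d, *)`, let `E` be a left `A`-module, and let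
`∇ : E → Ω¹A ⊗_A E` be a connection (with extension `NC` to `ΩⁿA ⊗_A E` and curvature
`∇² = NC 1 ∘ ∇`).  Here `Pmap p q` denotes the map `π^{p,q} ⊗ id_E` on `Ω•A ⊗_A E`, so
`∇̄ := (π^{0,1} ⊗ id_E)∘∇ = Pmap 0 1 ∘ ∇`, and `NB` is the degree-one extension of
`∇̄` (so that `∇̄² = NB ∘ ∇̄`).  Then `∇̄` is a `∂̄`-operator on `E` and its holomorphic
curvature satisfies `∇̄² = (π^{0,2} ⊗ id_E)∘∇²`.  In particular, if the
`(0,2)`-component of the curvature `∇²` vanishes, then `(E, ∇̄)` is a holomorphic left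
`A`-module. -/

theorem statement16 {Ω : Type*} [Ring Ω] [Algebra ℂ Ω] (C : ProjCalc Ω)
    (hint : C.Integrable)
    (E : Type*) [AddCommGroup E] [Module ℂ E] (M : AModData C E)
    -- a connection ∇ on E
    (nabla : E →ₗ[ℂ] TP C M)
    (hmem : ∀ e : E, nabla e ∈ TPdegTot C M 1)
    (hleib : ∀ a ∈ C.G 0, ∀ e : E,
      nabla (M.act a e) = tp C M (C.d a) e + lmulTP C M a (nabla e))
    -- its extension to higher covariant exterior derivatives:
    -- ∇(ξ⊗e) = dξ ⊗ e + (−1)ⁿ ξ ∧ ∇e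
    (NC : ℕ → (TP C M →ₗ[ℂ] TP C M))
    (hNC : ∀ (n : ℕ), ∀ ξ ∈ C.G n, ∀ e : E,
      NC n (tp C M ξ e) = tp C M (C.d ξ) e + ((-1 : ℂ) ^ n) • lmulTP C M ξ (nabla e))
    -- the maps π^{p,q} ⊗ id_E on Ω•A ⊗_A E
    (Pmap : ℕ → ℕ → (TP C M →ₗ[ℂ] TP C M))
    (hP : ∀ (p q : ℕ) (x : Ω) (e : E), Pmap p q (tp C M x e) = tp C M (C.π p q x) e)
    -- the extension of ∇̄ := Pmap 0 1 ∘ ∇ to Ω^{0,1}A ⊗_A E: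
    -- ∇̄(ξ⊗e) = ∂̄ξ ⊗ e − ξ ∧ ∇̄e for ξ ∈ Ω^{0,1}A
    (NB : TP C M →ₗ[ℂ] TP C M)
    (hNB : ∀ ξ ∈ C.pq 0 1, ∀ e : E,
      NB (tp C M ξ e) = tp C M (C.π 0 2 (C.d ξ)) e
        - lmulTP C M ξ (Pmap 0 1 (nabla e))) :
    -- ∇̄ maps into Ω^{0,1}A ⊗_A E
    (∀ e : E, Pmap 0 1 (nabla e) ∈ TPdeg C M 1)
    -- ∇̄ satisfies the ∂̄-Leibniz rule, so it is a ∂̄-operator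
    ∧ (∀ a ∈ C.G 0, ∀ e : E,
        Pmap 0 1 (nabla (M.act a e)) =
          tp C M (C.π 0 1 (C.d a)) e + lmulTP C M a (Pmap 0 1 (nabla e)))
    -- ∇̄² = (π^{0,2} ⊗ id_E)∘∇²
    ∧ (∀ e : E, NB (Pmap 0 1 (nabla e)) = Pmap 0 2 (NC 1 (nabla e)))
    -- if the (0,2)-component of the curvature vanishes, (E,∇̄) is holomorphic
    ∧ ((∀ e : E, Pmap 0 2 (NC 1 (nabla e)) = 0) →
        ∀ e : E, NB (Pmap 0 1 (nabla e)) = 0) := by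
  classical
  -- commuting Pmap 0 1 with left multiplication by a ∈ A on degree-1 elements
  have hcomm : ∀ a ∈ C.G 0, ∀ z ∈ TPdegTot C M 1,
      Pmap 0 1 (lmulTP C M a z) = lmulTP C M a (Pmap 0 1 z) := by
    intro a ha
    refine aux_degTot_induction C M ?_ ?_ ?_ ?_
    · intro x hx e
      rw [aux_lmulTP_tp, hP, hP, aux_lmulTP_tp, aux_pi01_mul C ha hx]
    · simp
    · intro u v hu hv; simp [map_add, hu, hv]
    · intro c u hu; simp [map_smul, hu]
  have h1 : ∀ e : E, Pmap 0 1 (nabla e) ∈ TPdeg C M 1 := by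
    intro e
    refine aux_degTot_induction C M (P := fun z => Pmap 0 1 z ∈ TPdeg C M 1)
      ?_ ?_ ?_ ?_ (nabla e) (hmem e)
    · intro x hx f
      rw [hP]
      exact Submodule.subset_span ⟨C.π 0 1 x, aux_pi_mem_pq C 0 1 x, f, rfl⟩
    · simp
    · intro u v hu hv; rw [map_add]; exact Submodule.add_mem _ hu hv
    · intro c u hu; rw [map_smul]; exact Submodule.smul_mem _ c hu
  have h3 : ∀ e : E, NB (Pmap 0 1 (nabla e)) = Pmap 0 2 (NC 1 (nabla e)) := by
    intro e
    refine aux_degTot_induction C M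
      (P := fun z => NB (Pmap 0 1 z) = Pmap 0 2 (NC 1 z)) ?_ ?_ ?_ ?_ (nabla e) (hmem e)
    · intro x hx f
      rw [hP, hNB _ (aux_pi_mem_pq C 0 1 x) f, hNC 1 x hx f]
      have hlm : lmulTP C M (C.π 0 1 x) (Pmap 0 1 (nabla f))
          = Pmap 0 2 (lmulTP C M x (nabla f)) := by
        refine aux_degTot_induction C M
          (P := fun w => lmulTP C M (C.π 0 1 x) (Pmap 0 1 w)
            = Pmap 0 2 (lmulTP C M x w)) ?_ ?_ ?_ ?_ (nabla f) (hmem f)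
        · intro y hy g
          rw [hP, aux_lmulTP_tp, aux_lmulTP_tp, hP, aux_pi02_mul C hx hy]
        · simp
        · intro u v hu hv; simp [map_add, hu, hv]
        · intro c u hu; simp [map_smul, hu]
      rw [hlm, map_add, hP, aux_pi02_d C hint hx]
      simp [sub_eq_add_neg]
    · simp
    · intro u v hu hv; simp [map_add, hu, hv]
    · intro c u hu; simp [map_smul, hu]
  refine ⟨h1, ?_, h3, fun h e => (h3 e).trans (h e)⟩
  intro a ha e
  rw [hleib a ha e, map_add, hP, hcomm a ha _ (hmem e)]
end
end
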